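/- arXiv:2503.12201 — 11 statements merged into one kernel-verified Lean document; each statement's English description precedes it below -/
import Mathlib

section
/- Let S be a finite set, M a matroid on ground set S with rank function ρ, and A = (A_1, ..., A_n) a family of subsets of S. Then there exists an injective function x : {1,...,n} → S with x_i ∈ A_i for all i and with the set {x_1,...,x_n} independent in M, if and only if for every subset J ⊆ {1,...,n} we have ρ(⋃_{j∈J} A_j) ≥ |J|. (Rado's theorem.) -/
-- subsets of rank-full sets are rank-full
lemma rado_subset_full {α : Type*} [DecidableEq α] (ρ : Finset α → ℕ)
    (hρ_le : ∀ X : Finset α, ρ X ≤ X.card)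
    (hρ_submod : ∀ X Y : Finset α, ρ (X ∪ Y) + ρ (X ∩ Y) ≤ ρ X + ρ Y)
    {X Y : Finset α} (hYX : Y ⊆ X) (hX : ρ X = X.card) : ρ Y = Y.card := by
  have h1 := hρ_submod Y (X \ Y)
  have h2 : Y ∪ (X \ Y) = X := Finset.union_sdiff_of_subset hYX
  rw [h2] at h1
  have h3 : ρ (X \ Y) ≤ (X \ Y).card := hρ_le _
  have h4 : (X \ Y).card = X.card - Y.card := Finset.card_sdiff_of_subset hYX
  have h5 : Y.card ≤ X.card := Finset.card_le_card hYX
  have h6 : ρ Y ≤ Y.card := hρ_le Y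
  omega

lemma rado_erase_union_erase {α : Type*} [DecidableEq α] {s : Finset α} {a b : α}
    (hab : a ≠ b) (ha : a ∈ s) (hb : b ∈ s) : s.erase a ∪ s.erase b = s := by
  ext x
  simp only [Finset.mem_union, Finset.mem_erase]
  constructor
  · rintro (⟨-, h⟩ | ⟨-, h⟩) <;> exact h
  · intro hx
    by_cases hxa : x = a
    · exact Or.inr ⟨by simpa [hxa] using hab, hx⟩
    · exact Or.inl ⟨hxa, hx⟩

lemma rado_hard {α : Type*} [Fintype α] [DecidableEq α]
    (ρ : Finset α → ℕ)
    (hρ_le : ∀ X : Finset α, ρ X ≤ X.card)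
    (hρ_mono : ∀ X Y : Finset α, X ⊆ Y → ρ X ≤ ρ Y)
    (hρ_submod : ∀ X Y : Finset α, ρ (X ∪ Y) + ρ (X ∩ Y) ≤ ρ X + ρ Y)
    (n : ℕ) :
    ∀ (N : ℕ) (A : Fin n → Finset α), (∑ i, (A i).card) ≤ N →
      (∀ J : Finset (Fin n), J.card ≤ ρ (J.biUnion A)) →
      ∃ x : Fin n → α, Function.Injective x ∧ (∀ i, x i ∈ A i) ∧
        ρ (Finset.image x Finset.univ) = (Finset.image x Finset.univ).card := by
  intro N
  induction N with
  | zero =>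
    intro A hsum hcond
    -- all A i empty; need n = 0
    by_cases hn : n = 0
    · subst hn
      refine ⟨fun i => i.elim0, fun i => i.elim0, fun i => i.elim0, ?_⟩
      simp only [Finset.univ_eq_empty, Finset.image_empty, Finset.card_empty]
      have h := hρ_le (∅ : Finset α)
      simp only [Finset.card_empty] at h
      omega
    · exfalso
      obtain ⟨i⟩ := Fin.pos_iff_nonempty.mp (Nat.pos_of_ne_zero hn)
      have h1 : (1 : ℕ) ≤ ρ (({i} : Finset (Fin n)).biUnion A) := by
        simpa using hcond {i}
      have h2 : (({i} : Finset (Fin n)).biUnion A) = A i := by simp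
      rw [h2] at h1
      have h3 : (A i).card ≤ ∑ j, (A j).card :=
        Finset.single_le_sum (f := fun j => (A j).card)
          (fun j _ => Nat.zero_le _) (Finset.mem_univ i)
      have := hρ_le (A i)
      omega
  | succ N ih =>
    intro A hsum hcond
    by_cases hsmall : ∀ i, (A i).card ≤ 1
    · -- all singletons
      have hone : ∀ i, (A i).card = 1 := by
        intro i
        have h1 : (1 : ℕ) ≤ ρ (({i} : Finset (Fin n)).biUnion A) := by
          simpa using hcond {i}
        have h2 : (({i} : Finset (Fin n)).biUnion A) = A i := by simp
        rw [h2] at h1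
        have := hρ_le (A i)
        have := hsmall i
        omega
      choose a ha using fun i => Finset.card_eq_one.mp (hone i)
      have hmem : ∀ i, a i ∈ A i := by
        intro i
        rw [ha i]
        exact Finset.mem_singleton_self _
      have hinj : Function.Injective a := by
        intro i j hij
        by_contra hne
        have hcard : ({i, j} : Finset (Fin n)).card = 2 := by
          rw [Finset.card_insert_of_notMem (by simpa using hne), Finset.card_singleton]
        have h1 := hcond {i, j}
        have h2 : (({i, j} : Finset (Fin n)).biUnion A) = A i ∪ A j := by
          simp [Finset.biUnion_insert]
        rw [h2, ha i, ha j, hij, Finset.union_self, hcard] at h1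
        have h4 := hρ_le ({a j} : Finset α)
        rw [Finset.card_singleton] at h4
        omega
      refine ⟨a, hinj, hmem, ?_⟩
      have himg : Finset.image a Finset.univ = Finset.univ.biUnion A := by
        ext x
        simp only [Finset.mem_image, Finset.mem_biUnion, Finset.mem_univ, true_and]
        constructor
        · rintro ⟨i, rfl⟩; exact ⟨i, hmem i⟩
        · rintro ⟨i, hx⟩
          rw [ha i, Finset.mem_singleton] at hx
          exact ⟨i, hx.symm⟩
      have h1 : (Finset.univ : Finset (Fin n)).card ≤ ρ (Finset.univ.biUnion A) :=
        hcond Finset.univ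
      have h2 : (Finset.image a Finset.univ).card = n := by
        rw [Finset.card_image_of_injective _ hinj, Finset.card_univ, Fintype.card_fin]
      have h3 := hρ_le (Finset.image a Finset.univ)
      rw [himg]
      rw [himg] at h2 h3
      simp only [Finset.card_univ, Fintype.card_fin] at h1
      omega
    · push_neg at hsmall
      obtain ⟨k, hk⟩ := hsmall
      obtain ⟨a, haA, b, hbA, hab⟩ := Finset.one_lt_card.mp hk
      -- try removing a or b from A k
      have hsum' : ∀ c ∈ A k, (∑ i, ((Function.update A k ((A k).erase c)) i).card) ≤ N := by
        intro c hc
        have hfun : (fun i => (Function.update A k ((A k).erase c) i).card)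
            = Function.update (fun i => (A i).card) k ((A k).erase c).card := by
          funext i
          by_cases h : i = k
          · subst h; simp
          · simp [Function.update_of_ne h]
        have hec : ((A k).erase c).card = (A k).card - 1 := Finset.card_erase_of_mem hc
        have hA : ∑ i, (A i).card
            = (A k).card + ∑ i ∈ Finset.univ \ {k}, (A i).card :=
          Finset.sum_eq_add_sum_sdiff_singleton_of_mem (Finset.mem_univ k) _
        calc ∑ i, (Function.update A k ((A k).erase c) i).card
            = ∑ i, Function.update (fun i => (A i).card) k ((A k).erase c).card i := by
              rw [hfun]
          _ = ((A k).erase c).card + ∑ i ∈ Finset.univ \ {k}, (A i).card :=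
              Finset.sum_update_of_mem (Finset.mem_univ k)
                (fun i => (A i).card) ((A k).erase c).card
          _ ≤ N := by omega
      have hmemupd : ∀ (c : α) (x : Fin n → α),
          (∀ i, x i ∈ (Function.update A k ((A k).erase c)) i) → ∀ i, x i ∈ A i := by
        intro c x hx i
        have := hx i
        by_cases hik : i = k
        · subst hik; rw [Function.update_self] at this; exact Finset.erase_subset _ _ this
        · rwa [Function.update_of_ne hik] at this
      by_cases hca : ∀ J : Finset (Fin n),
          J.card ≤ ρ (J.biUnion (Function.update A k ((A k).erase a)))
      · obtain ⟨x, h1, h2, h3⟩ := ih _ (hsum' a haA) hca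
        exact ⟨x, h1, hmemupd a x h2, h3⟩
      by_cases hcb : ∀ J : Finset (Fin n),
          J.card ≤ ρ (J.biUnion (Function.update A k ((A k).erase b)))
      · obtain ⟨x, h1, h2, h3⟩ := ih _ (hsum' b hbA) hcb
        exact ⟨x, h1, hmemupd b x h2, h3⟩
      exfalso
      push_neg at hca hcb
      obtain ⟨J₁, hJ₁⟩ := hca
      obtain ⟨J₂, hJ₂⟩ := hcb
      -- k must be in J₁, J₂
      have hkmem : ∀ (c : α) (J : Finset (Fin n)),
          ρ (J.biUnion (Function.update A k ((A k).erase c))) < J.card → k ∈ J := by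
        intro c J hJ
        by_contra hkJ
        have : J.biUnion (Function.update A k ((A k).erase c)) = J.biUnion A := by
          apply Finset.biUnion_congr rfl
          intro i hi
          rw [Function.update_of_ne (by rintro rfl; exact hkJ hi)]
        rw [this] at hJ
        exact absurd (hcond J) (by omega)
      have hk₁ := hkmem a J₁ hJ₁
      have hk₂ := hkmem b J₂ hJ₂
      set K₁ := J₁.erase k with hK₁
      set K₂ := J₂.erase k with hK₂
      have hbi : ∀ (c : α) (J : Finset (Fin n)), k ∈ J →
          J.biUnion (Function.update A k ((A k).erase c))
            = (J.erase k).biUnion A ∪ (A k).erase c := by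
        intro c J hkJ
        conv_lhs => rw [← Finset.insert_erase hkJ]
        rw [Finset.biUnion_insert, Function.update_self, Finset.union_comm]
        congr 1
        apply Finset.biUnion_congr rfl
        intro i hi
        rw [Function.update_of_ne (Finset.ne_of_mem_erase hi)]
      rw [hbi a J₁ hk₁] at hJ₁
      rw [hbi b J₂ hk₂] at hJ₂
      have hcK₁ : J₁.card = K₁.card + 1 := by
        rw [hK₁, Finset.card_erase_of_mem hk₁]
        have := Finset.card_pos.mpr ⟨k, hk₁⟩
        omega
      have hcK₂ : J₂.card = K₂.card + 1 := by
        rw [hK₂, Finset.card_erase_of_mem hk₂]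
        have := Finset.card_pos.mpr ⟨k, hk₂⟩
        omega
      set P := K₁.biUnion A ∪ (A k).erase a with hP
      set Q := K₂.biUnion A ∪ (A k).erase b with hQ
      have hP1 : ρ P ≤ K₁.card := by omega
      have hQ1 : ρ Q ≤ K₂.card := by omega
      have hsplit : (K₁ ∪ K₂).biUnion A = K₁.biUnion A ∪ K₂.biUnion A := by
        ext x
        simp only [Finset.mem_biUnion, Finset.mem_union]
        constructor
        · rintro ⟨i, (h | h), hx⟩
          · exact Or.inl ⟨i, h, hx⟩
          · exact Or.inr ⟨i, h, hx⟩
        · rintro (⟨i, h, hx⟩ | ⟨i, h, hx⟩)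
          · exact ⟨i, Or.inl h, hx⟩
          · exact ⟨i, Or.inr h, hx⟩
      have hPQu : P ∪ Q = (insert k (K₁ ∪ K₂)).biUnion A := by
        rw [Finset.biUnion_insert, hsplit, hP, hQ,
          Finset.union_union_union_comm, rado_erase_union_erase hab haA hbA,
          Finset.union_comm]
      have hPQi : (K₁ ∩ K₂).biUnion A ⊆ P ∩ Q := by
        apply Finset.subset_inter
        · exact (Finset.biUnion_subset_biUnion_of_subset_left A (Finset.inter_subset_left)).trans
            (Finset.subset_union_left)
        · exact (Finset.biUnion_subset_biUnion_of_subset_left A (Finset.inter_subset_right)).trans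
            (Finset.subset_union_left)
      have hsub := hρ_submod P Q
      have hU := hcond (insert k (K₁ ∪ K₂))
      have hI := hcond (K₁ ∩ K₂)
      have hknotmem : k ∉ K₁ ∪ K₂ := by
        simp [hK₁, hK₂]
      have hUcard : (insert k (K₁ ∪ K₂)).card = (K₁ ∪ K₂).card + 1 :=
        Finset.card_insert_of_notMem hknotmem
      have hiu : (K₁ ∪ K₂).card + (K₁ ∩ K₂).card = K₁.card + K₂.card :=
        Finset.card_union_add_card_inter K₁ K₂
      have h1 : ρ ((insert k (K₁ ∪ K₂)).biUnion A) = ρ (P ∪ Q) := by rw [hPQu]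
      have h2 : ρ ((K₁ ∩ K₂).biUnion A) ≤ ρ (P ∩ Q) := hρ_mono _ _ hPQi
      omega

/-- **Rado's theorem.** Let `S` be a finite set (here the type `α`), `M` a matroid on `S`
given by its rank function `ρ` (nonnegative, bounded by cardinality, monotone, submodular),
and `A = (A 1, …, A n)` a family of subsets of `S`.  There is an injective choice
`x : Fin n → α` with `x i ∈ A i` for all `i` whose image is independent in `M`
iff for every `J ⊆ {1,…,n}` we have `ρ(⋃_{j ∈ J} A j) ≥ |J|`. -/
theorem rado_theorem {α : Type*} [Fintype α] [DecidableEq α]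
    (ρ : Finset α → ℕ)
    (hρ_le : ∀ X : Finset α, ρ X ≤ X.card)
    (hρ_mono : ∀ X Y : Finset α, X ⊆ Y → ρ X ≤ ρ Y)
    (hρ_submod : ∀ X Y : Finset α, ρ (X ∪ Y) + ρ (X ∩ Y) ≤ ρ X + ρ Y)
    (n : ℕ) (A : Fin n → Finset α) :
    (∃ x : Fin n → α, Function.Injective x ∧ (∀ i, x i ∈ A i) ∧
        ρ (Finset.image x Finset.univ) = (Finset.image x Finset.univ).card) ↔
    (∀ J : Finset (Fin n), J.card ≤ ρ (J.biUnion A)) := by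
  constructor
  · rintro ⟨x, hinj, hmem, hfull⟩ J
    have hsub : Finset.image x J ⊆ Finset.image x Finset.univ :=
      Finset.image_subset_image (Finset.subset_univ J)
    have h1 : ρ (Finset.image x J) = (Finset.image x J).card :=
      rado_subset_full ρ hρ_le hρ_submod hsub hfull
    have h2 : (Finset.image x J).card = J.card :=
      Finset.card_image_of_injective J hinj
    have h3 : Finset.image x J ⊆ J.biUnion A := by
      intro y hy
      obtain ⟨j, hj, rfl⟩ := Finset.mem_image.mp hy
      exact Finset.mem_biUnion.mpr ⟨j, hj, hmem j⟩
    have := hρ_mono _ _ h3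
    omega
  · intro hcond
    exact rado_hard ρ hρ_le hρ_mono hρ_submod n (∑ i, (A i).card) A le_rfl hcond
end

section
/- Let S be a finite set and A = (A_1, ..., A_n) a family of subsets of S. Then there exists a matroid M on ground set S whose independent sets are exactly the partial transversals of A, i.e., the sets T ⊆ S for which there is an injective function σ from T to {1,...,n} with t ∈ A_{σ(t)} for every t ∈ T. (Edmonds–Fulkerson theorem.) -/
/-!
By Hall's theorem a set `T` is a partial transversal iff it satisfies Hall's condition
`#S ≤ #N(S)` for all finite `S ⊆ T`, where `N(S)` is the set of indices `i` with `A i`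
meeting `S`. Only the augmentation axiom needs an argument. Call `S ⊆ I` tight if
`#N(S) ≤ #S`; by submodularity of `S ↦ #N(S)`, tight subsets of a Hall set `I` are closed
under union, so there is a largest one, `U`. If no `e ∈ J \ I` can be added to `I`, every such
`e` has all its indices in `N(U)`, and then `W = J \ (I \ U)` has `N(W) ⊆ N(U)` while
`#W ≥ #J - #I + #U > #U ≥ #N(U)`, so `J` violates Hall's condition.
-/

/-- A partial transversal of the family `A = (A 1, …, A n)` of subsets of `α`:
a set `T` admitting an injection `σ : T → Fin n` with `t ∈ A (σ t)` for all `t ∈ T`. -/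
def IsPartialTransversal {α : Type*} {n : ℕ} (A : Fin n → Set α) (T : Set α) : Prop :=
  ∃ σ : T → Fin n, Function.Injective σ ∧ ∀ t : T, (t : α) ∈ A (σ t)

open Finset

section Hall

variable {α ι : Type*} [DecidableEq ι] {t : α → Finset ι}

def HallCondition (t : α → Finset ι) (T : Set α) : Prop :=
  ∀ S : Finset α, ↑S ⊆ T → #S ≤ #(S.biUnion t)

def IsTight (t : α → Finset ι) (S : Finset α) : Prop :=
  #(S.biUnion t) ≤ #S

lemma hallCondition_empty : HallCondition t ∅ := by
  intro S hS
  rw [Set.subset_empty_iff, coe_eq_empty] at hS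
  simp [hS]

lemma HallCondition.mono {T U : Set α} (hT : HallCondition t T) (hUT : U ⊆ T) :
    HallCondition t U :=
  fun S hS ↦ hT S (hS.trans hUT)

lemma hallCondition_iff_forall_finset {T : Set α} :
    HallCondition t T ↔ ∀ J : Finset α, ↑J ⊆ T → HallCondition t J :=
  ⟨fun hT _ hJ ↦ hT.mono hJ, fun h S hS ↦ h S hS S subset_rfl⟩

variable [DecidableEq α] {I : Finset α}

lemma HallCondition.isTight_union (hI : HallCondition t I) {X Y : Finset α} (hX : X ⊆ I)
    (hXt : IsTight t X) (hYt : IsTight t Y) : IsTight t (X ∪ Y) := by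
  have hinter : #(X ∩ Y) ≤ #((X ∩ Y).biUnion t) :=
    hI _ (by exact_mod_cast inter_subset_left.trans hX)
  have hsub : (X ∩ Y).biUnion t ⊆ X.biUnion t ∩ Y.biUnion t :=
    subset_inter (biUnion_subset_biUnion_of_subset_left t inter_subset_left)
      (biUnion_subset_biUnion_of_subset_left t inter_subset_right)
  have := card_le_card hsub
  have := card_union_add_card_inter X Y
  have := card_union_add_card_inter (X.biUnion t) (Y.biUnion t)
  rw [IsTight, union_biUnion]
  rw [IsTight] at hXt hYt
  omega

lemma HallCondition.exists_greatest_isTight (hI : HallCondition t I) :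
    ∃ U ⊆ I, IsTight t U ∧ ∀ S ⊆ I, IsTight t S → S ⊆ U := by
  classical
  let tight := I.powerset.filter (IsTight t)
  have mem_tight {S : Finset α} : S ∈ tight ↔ S ⊆ I ∧ IsTight t S := by simp [tight]
  obtain ⟨hUI, hU⟩ : tight.sup id ⊆ I ∧ IsTight t (tight.sup id) :=
    sup_induction (p := fun U ↦ U ⊆ I ∧ IsTight t U) ⟨empty_subset _, by simp [IsTight]⟩
      (fun X hX Y hY ↦ ⟨union_subset hX.1 hY.1, hI.isTight_union hX.1 hX.2 hY.2⟩)
      (fun S hS ↦ mem_tight.mp hS)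
  exact ⟨_, hUI, hU, fun S hSI hS ↦ le_sup (f := id) (mem_tight.mpr ⟨hSI, hS⟩)⟩

lemma HallCondition.exists_isTight_of_not_hallCondition_insert (hI : HallCondition t I)
    {e : α} (he : ¬HallCondition t ↑(insert e I)) :
    ∃ S ⊆ I, IsTight t S ∧ t e ⊆ S.biUnion t := by
  obtain ⟨S', hS'I, hS'⟩ : ∃ S' : Finset α, ↑S' ⊆ (↑(insert e I) : Set α) ∧
      #(S'.biUnion t) < #S' := by
    simpa [HallCondition] using he
  norm_cast at hS'I
  have heS' : e ∈ S' := by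
    by_contra heS'
    exact (hI S' (by simpa [subset_insert_iff_of_notMem heS'] using hS'I)).not_gt hS'
  set S := S'.erase e
  have hS'_eq : S' = insert e S := (insert_erase heS').symm
  have hSS' : S.biUnion t ⊆ S'.biUnion t :=
    biUnion_subset_biUnion_of_subset_left t (erase_subset e S')
  have hSI : S ⊆ I := subset_insert_iff.mp hS'I
  have hcard : #S' = #S + 1 := by rw [hS'_eq, card_insert_of_notMem (notMem_erase e S')]
  have hHall : #S ≤ #(S.biUnion t) := hI S (by exact_mod_cast hSI)
  have hN : S.biUnion t = S'.biUnion t := eq_of_subset_of_card_le hSS' (by omega)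
  refine ⟨S, hSI, ?_, ?_⟩
  · rw [IsTight, hN]
    omega
  · rw [hN, hS'_eq, biUnion_insert]
    exact subset_union_left

lemma HallCondition.exists_insert_of_card_lt {J : Finset α} (hI : HallCondition t I)
    (hJ : HallCondition t J) (hIJ : #I < #J) :
    ∃ e ∈ J, e ∉ I ∧ HallCondition t ↑(insert e I) := by
  by_contra! hblocked
  obtain ⟨U, hUI, hU, hUmax⟩ := hI.exists_greatest_isTight
  have hNU : ∀ e ∈ J, e ∉ I → t e ⊆ U.biUnion t := by
    intro e heJ heI
    obtain ⟨S, hSI, hS, heS⟩ :=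
      hI.exists_isTight_of_not_hallCondition_insert (hblocked e heJ heI)
    exact heS.trans (biUnion_subset_biUnion_of_subset_left t (hUmax S hSI hS))
  set W := J \ (I \ U)
  have hNW : W.biUnion t ⊆ U.biUnion t := by
    refine biUnion_subset.mpr fun a ha ↦ ?_
    obtain ⟨haJ, haIU⟩ := mem_sdiff.mp ha
    by_cases haI : a ∈ I
    · exact subset_biUnion_of_mem t (by simpa [haI] using haIU)
    · exact hNU a haJ haI
  have hW : #W ≤ #(W.biUnion t) := hJ W (by exact_mod_cast sdiff_subset)
  have := card_le_card hNW
  have : #J ≤ #W + #(I \ U) := card_le_card_sdiff_add_card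
  have := card_sdiff_add_card_eq_card hUI
  rw [IsTight] at hU
  omega

end Hall

lemma isPartialTransversal_iff_hallCondition {α : Type*} {n : ℕ} {A : Fin n → Set α}
    {t : α → Finset (Fin n)} (ht : ∀ a i, i ∈ t a ↔ a ∈ A i) {T : Set α} :
    IsPartialTransversal A T ↔ HallCondition t T := by
  classical
  have hall := all_card_le_biUnion_card_iff_exists_injective (fun x : T ↦ t x)
  simp only [ht] at hall
  rw [IsPartialTransversal, ← hall]
  have hmap (s : Finset T) : (s.map (.subtype _)).biUnion t = s.biUnion (fun x ↦ t x) := by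
    simp [map_eq_image, image_biUnion]
  constructor
  · intro h S hS
    rw [← subtype_map_of_mem (p := (· ∈ T)) fun x hx ↦ hS hx, hmap, card_map]
    exact h _
  · intro h s
    simpa [hmap] using h (s.map (.subtype _)) (by simp)

theorem edmonds_fulkerson_general {α : Type*} (n : ℕ) (A : Fin n → Set α) :
    ∃ M : Matroid α, M.E = Set.univ ∧
      ∀ T : Set α, M.Indep T ↔ IsPartialTransversal A T := by
  classical
  let t (a : α) : Finset (Fin n) := {i | a ∈ A i}
  have ht (a : α) (i : Fin n) : i ∈ t a ↔ a ∈ A i := by simp [t]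
  let M := IndepMatroid.ofFinset Set.univ (fun I : Finset α ↦ HallCondition t ↑I)
    (by simpa using hallCondition_empty)
    (fun _ _ hJ hIJ ↦ hJ.mono (coe_subset.mpr hIJ))
    (fun _ _ ↦ HallCondition.exists_insert_of_card_lt) (fun _ _ ↦ Set.subset_univ _)
  refine ⟨M.matroid, rfl, fun T ↦ ?_⟩
  rw [IndepMatroid.matroid_indep_iff, IndepMatroid.ofFinset_indep',
    isPartialTransversal_iff_hallCondition ht, hallCondition_iff_forall_finset]

/-- **Edmonds–Fulkerson.** For a family `A = (A 1, …, A n)` of subsets of a finite set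
(the type `α`), the partial transversals of `A` are the independent sets of a matroid. -/
theorem edmonds_fulkerson {α : Type*} [Fintype α] (n : ℕ) (A : Fin n → Set α) :
    ∃ M : Matroid α, M.E = Set.univ ∧
      ∀ T : Set α, M.Indep T ↔ IsPartialTransversal A T :=
  edmonds_fulkerson_general n A
end

section
/- Let M be a matroid on a finite ground set S, with ν* the nullity function of the dual matroid M* (so ν*(X) = |X| − ρ*(X) = min over bases B of M of |X ∩ B|), and let X = (X_1,...,X_n) be a family of subsets of S. Then there exists an avoiding transversal of X whose image is independent in M (an injective x : {1,...,n} → S with x_i ∉ X_i for all i and {x_1,...,x_n} independent in M) if and only if for every J ⊆ {1,...,n} we have ν*(⋂_{j∈J} X_j) + |J| ≤ ν*(S), where the intersection over the empty index set is S. -/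
/-!
Rado's theorem: a family `A` has a transversal that is independent in `M` iff
`|J| ≤ r(A(J))` for every `J`, where `A(J) = ⋃ j ∈ J, A j`. Necessity is immediate. For
sufficiency, shrink the sets one element at a time while keeping the condition. If deleting
either of two elements `a ≠ b` of `A i` broke it, there would be `K_a, K_b ∌ i` with
`r((A i \ {a}) ∪ A(K_a)) ≤ |K_a|` and `r((A i \ {b}) ∪ A(K_b)) ≤ |K_b|`; the union of these two
sets contains `A(K_a ∪ K_b ∪ {i})` and their intersection contains `A(K_a ∩ K_b)`, so
submodularity of `r` contradicts the condition. Once every set is a singleton, the condition for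
all indices forces the chosen elements to be distinct and independent.

The avoidance form is Rado's theorem for the complements `(X i)ᶜ`, because
`ν*(Y) = r(S) - r(S \ Y)` and `⋂ j ∈ J, X j` is the complement of `⋃ j ∈ J, (X j)ᶜ`.
-/

open Set Function

namespace Matroid

variable {α ι : Type*} {M : Matroid α} {A : ι → Set α} {B I X : Set α}

/-- Only meaningful where `M.eRk X` is finite, e.g. on a finite ground type (`⊤.toNat = 0`). -/
noncomputable def rk (M : Matroid α) (X : Set α) : ℕ := (M.eRk X).toNat

lemma rk_empty (M : Matroid α) : M.rk ∅ = 0 := by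
  simp [rk]

def RadoCondition (M : Matroid α) (A : ι → Set α) : Prop :=
  ∀ J : Finset ι, J.card ≤ M.rk (⋃ j ∈ J, A j)

lemma RadoCondition.exists_rk_le_card_of_not_update [DecidableEq ι] (h : M.RadoCondition A)
    {i : ι} {s : Set α} (hs : ¬ M.RadoCondition (update A i s)) :
    ∃ K : Finset ι, i ∉ K ∧ M.rk (s ∪ ⋃ j ∈ K, A j) ≤ K.card := by
  simp only [RadoCondition, not_forall, not_le] at hs
  obtain ⟨J, hJ⟩ := hs
  have hunion : ∀ K : Finset ι, i ∉ K → ⋃ j ∈ K, update A i s j = ⋃ j ∈ K, A j :=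
    fun K hK ↦ iUnion₂_congr fun j hj ↦ update_of_ne (ne_of_mem_of_not_mem hj hK) _ _
  by_cases hiJ : i ∈ J
  · refine ⟨J.erase i, J.notMem_erase i, ?_⟩
    rw [← Finset.insert_erase hiJ, Finset.set_biUnion_insert, update_self,
      hunion _ (J.notMem_erase i), Finset.card_insert_of_notMem (J.notMem_erase i)] at hJ
    omega
  · exact absurd (h J) (by rw [← hunion J hiJ]; omega)

section Finite

variable [Finite α]

lemma cast_rk (M : Matroid α) (X : Set α) : (M.rk X : ℕ∞) = M.eRk X :=
  ENat.natCast_toNat (eRk_ne_top_iff.2 (M.isRkFinite_of_finite (toFinite X)))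

lemma rk_mono (M : Matroid α) : Monotone M.rk := fun X Y hXY ↦ by
  exact_mod_cast (M.cast_rk X).trans_le ((M.eRk_mono hXY).trans_eq (M.cast_rk Y).symm)

lemma rk_le_ncard (M : Matroid α) (X : Set α) : M.rk X ≤ X.ncard := by
  have := M.eRk_le_encard X
  rw [← M.cast_rk, ← (toFinite X).cast_ncard_eq] at this
  exact_mod_cast this

lemma rk_inter_add_rk_union_le (M : Matroid α) (X Y : Set α) :
    M.rk (X ∩ Y) + M.rk (X ∪ Y) ≤ M.rk X + M.rk Y := by
  have := M.eRk_inter_add_eRk_union_le X Y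
  simp only [← M.cast_rk] at this
  exact_mod_cast this

lemma IsBasis'.ncard_eq_rk (hI : M.IsBasis' I X) : I.ncard = M.rk X := by
  have := hI.encard_eq_eRk
  rw [← M.cast_rk, ← (toFinite I).cast_ncard_eq] at this
  exact_mod_cast this

lemma IsBase.ncard_eq_rk_univ (hB : M.IsBase B) : B.ncard = M.rk univ := by
  have := hB.encard_eq_eRank
  rw [← eRk_univ_eq, ← M.cast_rk, ← (toFinite B).cast_ncard_eq] at this
  exact_mod_cast this

lemma Indep.ncard_le_rk_of_subset (hI : M.Indep I) (hIX : I ⊆ X) : I.ncard ≤ M.rk X := by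
  have := hI.encard_le_eRk_of_subset hIX
  rw [← M.cast_rk, ← (toFinite I).cast_ncard_eq] at this
  exact_mod_cast this

lemma indep_of_ncard_le_rk (h : I.ncard ≤ M.rk I) : M.Indep I := by
  refine (M.isRkFinite_of_finite (toFinite I)).indep_of_encard_le_eRk ?_
  rw [← M.cast_rk, ← (toFinite I).cast_ncard_eq]
  exact_mod_cast h

lemma isLeast_ncard_inter_isBase (M : Matroid α) (Y : Set α) :
    IsLeast {c | ∃ B, M.IsBase B ∧ (Y ∩ B).ncard = c} (M.rk univ - M.rk Yᶜ) := by
  have hsplit : ∀ B, M.IsBase B → (Y ∩ B).ncard + (Yᶜ ∩ B).ncard = M.rk univ := fun B hB ↦ by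
    rw [← hB.ncard_eq_rk_univ, ← ncard_inter_add_ncard_sdiff_eq_ncard B Y, inter_comm,
      add_right_inj, sdiff_eq_compl_inter]
  constructor
  · obtain ⟨I, hI⟩ := M.exists_isBasis' Yᶜ
    obtain ⟨B, hB, hIB⟩ := hI.isBasis_inter_ground.exists_isBase
    have hYB : Yᶜ ∩ B = I := by
      rw [hIB, inter_comm Yᶜ, inter_comm Yᶜ, ← inter_assoc, inter_eq_left.2 hB.subset_ground]
    refine ⟨B, hB, ?_⟩
    have := hsplit B hB
    rw [hYB, hI.ncard_eq_rk] at this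
    omega
  · rintro _ ⟨B, hB, rfl⟩
    have := (hB.indep.subset inter_subset_right).ncard_le_rk_of_subset
      (inter_subset_left (s := Yᶜ) (t := B))
    have := hsplit B hB
    omega

lemma radoCondition_of_indep_transversal {x : ι → α} (hx : Injective x) (hxA : ∀ i, x i ∈ A i)
    (hind : M.Indep (range x)) : M.RadoCondition A := fun J ↦ by
  rw [← ncard_coe_finset, ← ncard_image_of_injective _ hx]
  refine (hind.subset (image_subset_range x J)).ncard_le_rk_of_subset ?_
  rintro _ ⟨j, hj, rfl⟩
  exact mem_biUnion hj (hxA j)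

lemma RadoCondition.injective_and_indep [Fintype ι] {x : ι → α}
    (h : M.RadoCondition fun i ↦ {x i}) : Injective x ∧ M.Indep (range x) := by
  have hunion : ⋃ i ∈ (Finset.univ : Finset ι), {x i} = range x := by simp
  have hrk := h Finset.univ
  rw [hunion, Finset.card_univ] at hrk
  have hcard : (range x).ncard ≤ Fintype.card ι := by
    rw [← image_univ, ← Nat.card_eq_fintype_card, ← ncard_univ]
    exact ncard_image_le
  have hle := M.rk_le_ncard (range x)
  refine ⟨injOn_univ.1 (injOn_of_ncard_image_eq ?_), indep_of_ncard_le_rk (by omega)⟩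
  rw [image_univ, ncard_univ, Nat.card_eq_fintype_card]
  omega

lemma RadoCondition.update_diff_singleton [DecidableEq ι] (h : M.RadoCondition A) {i : ι}
    {a b : α} (ha : a ∈ A i) (hab : a ≠ b) :
    M.RadoCondition (update A i (A i \ {a})) ∨ M.RadoCondition (update A i (A i \ {b})) := by
  by_contra! hfail
  obtain ⟨Ka, hiKa, hKa⟩ := h.exists_rk_le_card_of_not_update hfail.1
  obtain ⟨Kb, hiKb, hKb⟩ := h.exists_rk_le_card_of_not_update hfail.2
  set s := (A i \ {a}) ∪ ⋃ j ∈ Ka, A j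
  set t := (A i \ {b}) ∪ ⋃ j ∈ Kb, A j
  have hunion : ⋃ j ∈ insert i (Ka ∪ Kb), A j ⊆ s ∪ t := by
    intro c hc
    simp only [Finset.mem_insert, Finset.mem_union, mem_iUnion, exists_prop] at hc
    obtain ⟨j, rfl | hj | hj, hc⟩ := hc
    · by_cases hca : c = a
      · exact Or.inr (Or.inl ⟨hc, by rintro rfl; exact hab hca.symm⟩)
      · exact Or.inl (Or.inl ⟨hc, hca⟩)
    · exact Or.inl (Or.inr (mem_biUnion hj hc))
    · exact Or.inr (Or.inr (mem_biUnion hj hc))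
  have hinter : ⋃ j ∈ Ka ∩ Kb, A j ⊆ s ∩ t := by
    intro c hc
    simp only [Finset.mem_inter, mem_iUnion, exists_prop] at hc
    obtain ⟨j, ⟨hja, hjb⟩, hc⟩ := hc
    exact ⟨Or.inr (mem_biUnion hja hc), Or.inr (mem_biUnion hjb hc)⟩
  have hcup := (h _).trans (M.rk_mono hunion)
  have hcap := (h _).trans (M.rk_mono hinter)
  rw [Finset.card_insert_of_notMem (by simp [hiKa, hiKb])] at hcup
  have := M.rk_inter_add_rk_union_le s t
  have := Finset.card_union_add_card_inter Ka Kb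
  omega

lemma RadoCondition.exists_indep_transversal [Fintype ι] (h : M.RadoCondition A) :
    ∃ x : ι → α, Injective x ∧ (∀ i, x i ∈ A i) ∧ M.Indep (range x) := by
  classical
  induction hN : ∑ i, (A i).ncard using Nat.strong_induction_on generalizing A with
  | _ N ih =>
  by_cases hsmall : ∀ i, (A i).ncard ≤ 1
  · have hsingle : ∀ i, ∃ a, A i = {a} := fun i ↦ by
      have := (h {i}).trans (M.rk_le_ncard _)
      simp only [Finset.card_singleton, Finset.mem_singleton, iUnion_iUnion_eq_left] at this
      exact ncard_eq_one.1 (le_antisymm (hsmall i) this)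
    choose x hx using hsingle
    obtain rfl : A = fun i ↦ {x i} := funext hx
    exact ⟨x, h.injective_and_indep.1, fun i ↦ rfl, h.injective_and_indep.2⟩
  push Not at hsmall
  obtain ⟨i, hi⟩ := hsmall
  obtain ⟨a, b, ha, hb, hab⟩ := (one_lt_ncard_iff (toFinite _)).1 hi
  obtain ⟨z, hz, hz'⟩ : ∃ z ∈ A i, M.RadoCondition (update A i (A i \ {z})) :=
    (h.update_diff_singleton ha hab).elim (⟨a, ha, ·⟩) (⟨b, hb, ·⟩)
  have hle : update A i (A i \ {z}) ≤ A := update_le_iff.2 ⟨sdiff_subset, fun _ _ ↦ le_rfl⟩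
  have hlt : ∑ j, (update A i (A i \ {z}) j).ncard < N := hN ▸ Finset.sum_lt_sum
    (fun j _ ↦ ncard_le_ncard (hle j)) ⟨i, Finset.mem_univ i, by
      simpa using ncard_sdiff_singleton_lt_of_mem hz⟩
  obtain ⟨x, hx, hxA, hind⟩ := ih _ hlt hz' rfl
  exact ⟨x, hx, fun j ↦ hle j (hxA j), hind⟩

theorem exists_indep_transversal_iff [Fintype ι] :
    (∃ x : ι → α, Injective x ∧ (∀ i, x i ∈ A i) ∧ M.Indep (range x)) ↔ M.RadoCondition A :=
  ⟨fun ⟨_, hx, hxA, hind⟩ ↦ radoCondition_of_indep_transversal hx hxA hind,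
    RadoCondition.exists_indep_transversal⟩

end Finite

end Matroid

open Matroid

theorem avoiding_rado_general {α : Type*} [Fintype α]
    (M : Matroid α)
    (νstar : Set α → ℕ)
    (hνstar : ∀ Y : Set α, IsLeast {c : ℕ | ∃ B, M.IsBase B ∧ (Y ∩ B).ncard = c} (νstar Y))
    (n : ℕ) (X : Fin n → Set α) :
    (∃ x : Fin n → α, Function.Injective x ∧ (∀ i, x i ∉ X i) ∧ M.Indep (Set.range x)) ↔
    (∀ J : Finset (Fin n), νstar (⋂ j ∈ J, X j) + J.card ≤ νstar Set.univ) := by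
  have hν Y : νstar Y = M.rk univ - M.rk Yᶜ := (hνstar Y).unique (M.isLeast_ncard_inter_isBase Y)
  refine (exists_indep_transversal_iff (A := fun i ↦ (X i)ᶜ)).trans (forall_congr' fun J ↦ ?_)
  rw [hν, hν, compl_univ, rk_empty, compl_iInter₂]
  have := M.rk_mono (subset_univ (⋃ j ∈ J, (X j)ᶜ))
  dsimp only
  omega

/-- **Rado's theorem, avoidance form.** Let `M` be a matroid on the finite ground set `α`,
and let `ν*` be the nullity function of the dual matroid, characterized as
`ν*(Y) = min {|Y ∩ B| : B a base of M}`.  Then the family `X = (X 1, …, X n)` has an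
avoiding transversal whose image is independent in `M` iff for every `J ⊆ {1,…,n}` we have
`ν*(⋂_{j ∈ J} X j) + |J| ≤ ν*(S)` (the intersection over `J = ∅` being all of `S`). -/
theorem avoiding_rado {α : Type*} [Fintype α]
    (M : Matroid α) (hE : M.E = Set.univ)
    (νstar : Set α → ℕ)
    (hνstar : ∀ Y : Set α, IsLeast {c : ℕ | ∃ B, M.IsBase B ∧ (Y ∩ B).ncard = c} (νstar Y))
    (n : ℕ) (X : Fin n → Set α) :
    (∃ x : Fin n → α, Function.Injective x ∧ (∀ i, x i ∉ X i) ∧ M.Indep (Set.range x)) ↔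
    (∀ J : Finset (Fin n), νstar (⋂ j ∈ J, X j) + J.card ≤ νstar Set.univ) :=
  avoiding_rado_general M νstar hνstar n X
end

section
/- Let X = (X_1,...,X_n) be a family of subsets of a set S and let T ⊆ S be a finite set. Then T is a partial avoiding transversal of X (that is, there is an injection σ : T → {1,...,n} with t ∉ X_{σ(t)} for all t ∈ T) if and only if for every subset J ⊆ {1,...,n} we have |T ∩ ⋂_{j∈J} X_j| + |J| ≤ n, where the intersection over the empty index set is S. -/
/-- A finite set `T ⊆ S` is a partial avoiding transversal of the family
`X = (X 1, …, X n)` of subsets of `S` (i.e. there is an injection `σ : T → Fin n` with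
`t ∉ X (σ t)` for all `t ∈ T`) iff for every `J ⊆ {1,…,n}` we have
`|T ∩ ⋂_{j ∈ J} X j| + |J| ≤ n`, the intersection over `J = ∅` being all of `S`. -/
theorem is_partial_avoiding_transversal_iff {α : Type*}
    (n : ℕ) (X : Fin n → Set α) (T : Set α) (hT : T.Finite) :
    (∃ σ : T → Fin n, Function.Injective σ ∧ ∀ t : T, (t : α) ∉ X (σ t)) ↔
    (∀ J : Finset (Fin n), (T ∩ ⋂ j ∈ J, X j).ncard + J.card ≤ n) := by
  classical
  haveI : Fintype T := hT.fintype
  set f : T → Finset (Fin n) := fun a => Finset.univ.filter (fun j => (a : α) ∉ X j) with hf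
  -- cardinality link
  have hcard : ∀ J : Finset (Fin n),
      (T ∩ ⋂ j ∈ J, X j).ncard
        = (Finset.univ.filter (fun a : T => ∀ j ∈ J, (a : α) ∈ X j)).card := by
    intro J
    have himg : (T ∩ ⋂ j ∈ J, X j)
        = Subtype.val '' ((Finset.univ.filter (fun a : T => ∀ j ∈ J, (a : α) ∈ X j)) : Set T) := by
      ext x
      simp only [Set.mem_inter_iff, Set.mem_iInter, Set.mem_image, Finset.coe_filter,
        Set.mem_setOf_eq, Finset.mem_univ, true_and]
      constructor
      · rintro ⟨hx, hall⟩
        exact ⟨⟨x, hx⟩, hall, rfl⟩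
      · rintro ⟨⟨a, ha⟩, hall, rfl⟩
        exact ⟨ha, hall⟩
    rw [himg, Set.ncard_image_of_injective _ Subtype.val_injective, Set.ncard_coe_finset]
  have key := Finset.all_card_le_biUnion_card_iff_exists_injective f
  simp only [hf, Finset.mem_filter, Finset.mem_univ, true_and] at key
  rw [← key]
  constructor
  · intro hall J
    set s := Finset.univ.filter (fun a : T => ∀ j ∈ J, (a : α) ∈ X j) with hs
    have hdisj : Disjoint J (s.biUnion f) := by
      rw [Finset.disjoint_left]
      intro j hj hj'
      rcases Finset.mem_biUnion.1 hj' with ⟨a, ha, haf⟩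
      simp only [hf, Finset.mem_filter] at haf
      exact haf.2 ((Finset.mem_filter.1 ha).2 j hj)
    calc (T ∩ ⋂ j ∈ J, X j).ncard + J.card = s.card + J.card := by rw [hcard]
      _ ≤ (s.biUnion f).card + J.card := by gcongr; exact hall s
      _ = (J ∪ s.biUnion f).card := by
          rw [Finset.card_union_of_disjoint hdisj, Nat.add_comm]
      _ ≤ (Finset.univ : Finset (Fin n)).card := Finset.card_le_univ _
      _ = n := by simp
  · intro hJ s
    set J := Finset.univ.filter (fun j : Fin n => ∀ a ∈ s, (a : α) ∈ X j) with hJdef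
    have hbu : s.biUnion f = Jᶜ := by
      ext j
      simp [hf, hJdef, Finset.mem_biUnion, not_forall]
    have hsub : s ⊆ Finset.univ.filter (fun a : T => ∀ j ∈ J, (a : α) ∈ X j) := by
      intro a ha
      simp only [Finset.mem_filter, Finset.mem_univ, true_and, hJdef]
      intro j hj
      exact hj a ha
    have h1 : s.card ≤ (T ∩ ⋂ j ∈ J, X j).ncard := by
      rw [hcard]; exact Finset.card_le_card hsub
    have h2 := hJ J
    rw [hbu, Finset.card_compl]
    simp only [Fintype.card_fin]
    omega
end

section
/- Let r be the rank function of a q-matroid on a finite-dimensional vector space V over a finite field F, with nullity function n(X) = dim X − r(X). If a subspace S ≤ V has n(S) = 1, then there is a unique circuit C of the q-matroid with C ≤ S; moreover, for every subspace T ≤ S, n(T) = 1 if C ≤ T and n(T) = 0 otherwise. -/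
/-- In a q-matroid, a subspace is a circuit if it is dependent but every proper
subspace is independent. -/
def QMatroid.IsCircuit {F V : Type*} [Field F] [AddCommGroup V] [Module F V]
    (r : Submodule F V → ℤ) (C : Submodule F V) : Prop :=
  r C < Module.finrank F C ∧ ∀ D : Submodule F V, D < C → r D = Module.finrank F D

/-- If a subspace `S` of a q-matroid (with rank function `r` and nullity
`n X = dim X − r X`) has nullity `1`, then there is a unique circuit `C ≤ S`; moreover
every subspace `T ≤ S` has nullity `1` if `C ≤ T` and nullity `0` otherwise. -/
theorem qmatroid_fundamental_circuit {F V : Type*} [Field F] [Fintype F]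
    [AddCommGroup V] [Module F V] [FiniteDimensional F V]
    (r : Submodule F V → ℤ)
    (h0 : ∀ A : Submodule F V, 0 ≤ r A)
    (h1 : ∀ A : Submodule F V, r A ≤ Module.finrank F A)
    (h2 : ∀ A B : Submodule F V, A ≤ B → r A ≤ r B)
    (h3 : ∀ A B : Submodule F V, r (A ⊔ B) + r (A ⊓ B) ≤ r A + r B)
    (S : Submodule F V) (hS : (Module.finrank F S : ℤ) - r S = 1) :
    ∃ C : Submodule F V, (QMatroid.IsCircuit r C ∧ C ≤ S) ∧
      (∀ C' : Submodule F V, QMatroid.IsCircuit r C' ∧ C' ≤ S → C' = C) ∧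
      (∀ T : Submodule F V, T ≤ S →
        ((C ≤ T → (Module.finrank F T : ℤ) - r T = 1) ∧
         (¬ C ≤ T → (Module.finrank F T : ℤ) - r T = 0))) := by
  set n : Submodule F V → ℤ := fun X => (Module.finrank F X : ℤ) - r X with hn
  -- dimension is modular
  have hdim : ∀ A B : Submodule F V,
      (Module.finrank F ↥(A ⊔ B) : ℤ) + (Module.finrank F ↥(A ⊓ B) : ℤ)
        = Module.finrank F A + Module.finrank F B := by
    intro A B
    exact_mod_cast congrArg (Nat.cast : ℕ → ℤ)
      (Submodule.finrank_sup_add_finrank_inf_eq A B)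
  -- nullity is monotone
  have hMono : ∀ A B : Submodule F V, A ≤ B → n A ≤ n B := by
    intro A B hAB
    obtain ⟨W', hW'⟩ := Submodule.exists_isCompl (Submodule.comap B.subtype A)
    set W : Submodule F V := W'.map B.subtype with hW
    have hmapA : (Submodule.comap B.subtype A).map B.subtype = A := by
      rw [Submodule.map_comap_subtype, inf_eq_right.mpr hAB]
    have hsup : A ⊔ W = B := by
      rw [← hmapA, hW, ← Submodule.map_sup, hW'.sup_eq_top, Submodule.map_subtype_top]
    have hinf : A ⊓ W = ⊥ := by
      rw [← hmapA, hW, ← Submodule.map_inf _ (Submodule.injective_subtype B),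
        hW'.inf_eq_bot, Submodule.map_bot]
    have hd := hdim A W
    rw [hsup, hinf] at hd
    have hrb : r B ≤ r A + r W := by
      have := h3 A W
      rw [hsup, hinf] at this
      have := h0 (⊥ : Submodule F V)
      omega
    have hrw := h1 W
    have hbot : (Module.finrank F (⊥ : Submodule F V) : ℤ) = 0 := by
      simp
    simp only [hn]
    omega
  -- nullity is supermodular
  have hSuper : ∀ A B : Submodule F V, n A + n B ≤ n (A ⊔ B) + n (A ⊓ B) := by
    intro A B
    have := h3 A B
    have := hdim A B
    simp only [hn]
    omega
  have hnS : n S = 1 := hS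
  -- dependent subspaces of S
  set D : Set (Submodule F V) := {T | T ≤ S ∧ 1 ≤ n T} with hD
  have hSD : S ∈ D := ⟨le_rfl, by omega⟩
  -- nullity of subspaces of S is at most 1
  have hle1 : ∀ T : Submodule F V, T ≤ S → n T ≤ 1 := fun T hT => hnS ▸ hMono T S hT
  -- D is closed under intersection
  have hInter : ∀ A B, A ∈ D → B ∈ D → A ⊓ B ∈ D := by
    intro A B hA hB
    refine ⟨le_trans inf_le_left hA.1, ?_⟩
    have h4 := hSuper A B
    have h5 := hle1 (A ⊔ B) (sup_le hA.1 hB.1)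
    have := hA.2; have := hB.2
    omega
  -- minimal element of D
  obtain ⟨C, hC, hmin⟩ := (IsWellFounded.wf (r := ((· < ·) : Submodule F V → _ → _))).has_min D ⟨S, hSD⟩
  -- C is the minimum of D
  have hmin' : ∀ T ∈ D, C ≤ T := by
    intro T hT
    have hCT := hInter C T hC hT
    have : ¬ (C ⊓ T < C) := hmin _ hCT
    have : C ⊓ T = C := by
      rcases lt_or_eq_of_le (inf_le_left : C ⊓ T ≤ C) with h | h
      · exact absurd h this
      · exact h
    exact this ▸ inf_le_right
  have hCdep : r C < Module.finrank F C := by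
    have := hC.2; simp only [hn] at this; omega
  have hCcirc : QMatroid.IsCircuit r C := by
    refine ⟨hCdep, fun E hE => ?_⟩
    have hES : E ≤ S := le_trans hE.le hC.1
    have hEind : ¬ (1 ≤ n E) := fun h => hmin E ⟨hES, h⟩ hE
    have h1E := h1 E
    simp only [hn] at hEind
    omega
  refine ⟨C, ⟨hCcirc, hC.1⟩, ?_, ?_⟩
  · intro C' ⟨hC'circ, hC'S⟩
    have hC'D : C' ∈ D := by
      refine ⟨hC'S, ?_⟩
      have := hC'circ.1; simp only [hn]; omega
    have hCC' : C ≤ C' := hmin' C' hC'D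
    rcases lt_or_eq_of_le hCC' with h | h
    · exact absurd (hC'circ.2 C h) (by omega)
    · exact h.symm
  · intro T hTS
    constructor
    · intro hCT
      have h1' : 1 ≤ n T := le_trans hC.2 (hMono C T hCT)
      have h2' := hle1 T hTS
      simp only [hn] at h1' h2' ⊢
      omega
    · intro hCT
      have hTind : ¬ (1 ≤ n T) := fun h => hCT (hmin' T ⟨hTS, h⟩)
      have := h1 T
      simp only [hn] at hTind ⊢
      omega
end

section
/- Let r_M and r_N be rank functions of q-matroids M and N on the same finite-dimensional vector space V over a finite field F, let f(A) = r_M(A) + r_N(A), and let r be the rank function of the union M ∨ N, given by r(A) = min over subspaces B ≤ A of (f(B) + dim A − dim B). If r(V) = r_M(V), then r(A) = r_M(A) for every subspace A ≤ V. -/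
/-- Unit-increase property of a q-matroid rank function. -/
lemma qmatroid_step {F V : Type*} [Field F] [Fintype F]
    [AddCommGroup V] [Module F V] [FiniteDimensional F V]
    (rM : Submodule F V → ℤ)
    (hM0 : ∀ A : Submodule F V, 0 ≤ rM A)
    (hM1 : ∀ A : Submodule F V, rM A ≤ Module.finrank F A)
    (hM3 : ∀ A B : Submodule F V, rM (A ⊔ B) + rM (A ⊓ B) ≤ rM A + rM B) :
    ∀ A B : Submodule F V, B ≤ A →
      rM A ≤ rM B + (Module.finrank F A : ℤ) - Module.finrank F B := by
  suffices h : ∀ k : ℕ, ∀ A B : Submodule F V, B ≤ A →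
      Module.finrank F A - Module.finrank F B ≤ k →
      rM A ≤ rM B + (Module.finrank F A : ℤ) - Module.finrank F B by
    intro A B hBA
    exact h _ A B hBA le_rfl
  intro k
  induction k with
  | zero =>
    intro A B hBA hk
    have hle : Module.finrank F B ≤ Module.finrank F A :=
      Submodule.finrank_mono hBA
    have : Module.finrank F A ≤ Module.finrank F B := by omega
    have hEq : B = A := Submodule.eq_of_le_of_finrank_le hBA this
    subst hEq
    omega
  | succ k ih =>
    intro A B hBA hk
    by_cases hEq : B = A
    · subst hEq; omega
    · have hlt : B < A := lt_of_le_of_ne hBA hEq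
      obtain ⟨x, hxA, hxB⟩ := SetLike.exists_of_lt hlt
      have hx0 : x ≠ 0 := fun h => hxB (h ▸ B.zero_mem)
      set B' := B ⊔ Submodule.span F {x} with hB'
      have hB'A : B' ≤ A := sup_le hBA ((Submodule.span_singleton_le_iff_mem x A).2 hxA)
      have hBB' : B < B' := by
        refine lt_of_le_of_ne le_sup_left (fun h => hxB ?_)
        have : x ∈ B' := Submodule.mem_sup_right (Submodule.mem_span_singleton_self x)
        rwa [← h] at this
      have hdim : Module.finrank F B < Module.finrank F B' :=
        Submodule.finrank_lt_finrank_of_lt hBB'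
      have hdim2 : Module.finrank F B' ≤ Module.finrank F A :=
        Submodule.finrank_mono hB'A
      have hIH : rM A ≤ rM B' + (Module.finrank F A : ℤ) - Module.finrank F B' :=
        ih A B' hB'A (by omega)
      have hspan : rM (Submodule.span F {x}) ≤ 1 := by
        have := hM1 (Submodule.span F {x})
        rwa [finrank_span_singleton hx0] at this
      have hsub := hM3 B (Submodule.span F {x})
      have hnn := hM0 (B ⊓ Submodule.span F {x})
      have hB'le : rM B' ≤ rM B + 1 := by
        rw [hB']; linarith
      have hcast : (Module.finrank F B : ℤ) + 1 ≤ Module.finrank F B' := by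
        exact_mod_cast hdim
      linarith

/-- If the union `M ∨ N` of two q-matroids on `V` — whose rank function is
`r A = min {r_M B + r_N B + dim A − dim B : B ≤ A}` — has the same rank as `M`,
then `M ∨ N = M`. -/
theorem qmatroid_union_same_rank {F V : Type*} [Field F] [Fintype F]
    [AddCommGroup V] [Module F V] [FiniteDimensional F V]
    (rM rN : Submodule F V → ℤ)
    (hM0 : ∀ A : Submodule F V, 0 ≤ rM A)
    (hM1 : ∀ A : Submodule F V, rM A ≤ Module.finrank F A)
    (hM2 : ∀ A B : Submodule F V, A ≤ B → rM A ≤ rM B)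
    (hM3 : ∀ A B : Submodule F V, rM (A ⊔ B) + rM (A ⊓ B) ≤ rM A + rM B)
    (hN0 : ∀ A : Submodule F V, 0 ≤ rN A)
    (hN1 : ∀ A : Submodule F V, rN A ≤ Module.finrank F A)
    (hN2 : ∀ A B : Submodule F V, A ≤ B → rN A ≤ rN B)
    (hN3 : ∀ A B : Submodule F V, rN (A ⊔ B) + rN (A ⊓ B) ≤ rN A + rN B)
    (r : Submodule F V → ℤ)
    (hr : ∀ A : Submodule F V, IsLeast
      {v : ℤ | ∃ B ≤ A, v = (rM B + rN B) + (Module.finrank F A : ℤ) - Module.finrank F B}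
      (r A))
    (hrank : r ⊤ = rM ⊤) :
    ∀ A : Submodule F V, r A = rM A := by
  have step := qmatroid_step rM hM0 hM1 hM3
  -- extract the witness for the top space
  obtain ⟨B, hBtop, hBval⟩ := (hr ⊤).1
  rw [hrank] at hBval
  have hstepB := step ⊤ B hBtop
  have hrNB : rN B = 0 := le_antisymm (by linarith) (hN0 B)
  have hTopEq : rM ⊤ = rM B + (Module.finrank F (⊤ : Submodule F V) : ℤ)
      - Module.finrank F B := by linarith
  intro A
  -- lower bound: rM A ≤ r A
  have hlow : rM A ≤ r A := by
    obtain ⟨C, hCA, hCval⟩ := (hr A).1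
    have h1 := step A C hCA
    have h2 := hN0 C
    linarith
  -- upper bound
  have hmem : (rM (A ⊓ B) + rN (A ⊓ B)) + (Module.finrank F A : ℤ)
      - Module.finrank F ↥(A ⊓ B) ∈
      {v : ℤ | ∃ C ≤ A, v = (rM C + rN C) + (Module.finrank F A : ℤ) - Module.finrank F C} :=
    ⟨A ⊓ B, inf_le_left, rfl⟩
  have hub := (hr A).2 hmem
  have hrNAB : rN (A ⊓ B) = 0 :=
    le_antisymm (le_trans (hN2 _ _ inf_le_right) hrNB.le) (hN0 _)
  have hsup := step ⊤ (A ⊔ B) le_top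
  have hsub := hM3 A B
  have hdims : Module.finrank F ↥(A ⊔ B) + Module.finrank F ↥(A ⊓ B)
      = Module.finrank F A + Module.finrank F B :=
    Submodule.finrank_sup_add_finrank_inf_eq A B
  have hdims' : (Module.finrank F ↥(A ⊔ B) : ℤ) + Module.finrank F ↥(A ⊓ B)
      = (Module.finrank F A : ℤ) + Module.finrank F B := by exact_mod_cast hdims
  -- rM(A⊔B) ≥ rM B − dim B + dim(A⊔B)
  have hABsup : rM B + (Module.finrank F ↥(A ⊔ B) : ℤ) - Module.finrank F B ≤ rM (A ⊔ B) := by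
    have := step ⊤ (A ⊔ B) le_top
    linarith
  have hnn := hM0 (A ⊓ B)
  have hkey : rM (A ⊓ B) + (Module.finrank F A : ℤ) - Module.finrank F ↥(A ⊓ B) ≤ rM A := by
    linarith
  exact le_antisymm (by rw [hrNAB] at hub; linarith) hlow
end

section
/- Let V be a finite-dimensional vector space over a finite field F and let X = (X_1,...,X_n) be a family of subspaces of V. Then there exists a rank function r of a q-matroid on V (i.e., r satisfies 0 ≤ r(A) ≤ dim A, monotonicity, and submodularity) such that for every subspace T ≤ V, r(T) = dim T if and only if T is a partial q-transversal of X. -/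
/-- `T` is a partial q-transversal of the family `X` of subspaces of `V`: every
(vector-space) basis `b 1, …, b m` of `T` admits an injection `σ` into the index set
with `b i ∉ X (σ i)` for all `i`. -/
def IsPartialQTransversal {F V ι : Type*} [Field F] [AddCommGroup V] [Module F V]
    (X : ι → Submodule F V) (T : Submodule F V) : Prop :=
  ∀ (m : ℕ) (b : Fin m → V), LinearIndependent F b → Submodule.span F (Set.range b) = T →
    ∃ σ : Fin m → ι, Function.Injective σ ∧ ∀ i, b i ∉ X (σ i)

section Aux

open Module Finset

variable {F V : Type*} [Field F]
    [AddCommGroup V] [Module F V] [FiniteDimensional F V]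
    {n : ℕ} (X : Fin n → Submodule F V)

open scoped Classical in
/-- The number of indices `j` with `U ≰ X j`. -/
noncomputable def qdef (U : Submodule F V) : ℕ :=
  (Finset.univ.filter (fun j => ¬ U ≤ X j)).card

open scoped Classical in
lemma qdef_mono {U W : Submodule F V} (h : U ≤ W) : qdef X U ≤ qdef X W := by
  classical
  apply Finset.card_le_card
  intro j hj
  simp only [qdef, Finset.mem_filter, Finset.mem_univ, true_and] at hj ⊢
  exact fun hW => hj (h.trans hW)

lemma qdef_bot : qdef X ⊥ = 0 := by
  classical
  simp [qdef]

lemma qdef_submodular (U W : Submodule F V) :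
    qdef X (U ⊔ W) + qdef X (U ⊓ W) ≤ qdef X U + qdef X W := by
  classical
  unfold qdef
  have h1 : (Finset.univ.filter (fun j => ¬ U ⊔ W ≤ X j)) ⊆
      (Finset.univ.filter (fun j => ¬ U ≤ X j)) ∪ (Finset.univ.filter (fun j => ¬ W ≤ X j)) := by
    intro j hj
    simp only [Finset.mem_filter, Finset.mem_univ, true_and, Finset.mem_union, sup_le_iff] at hj ⊢
    tauto
  have h2 : (Finset.univ.filter (fun j => ¬ U ⊓ W ≤ X j)) ⊆
      (Finset.univ.filter (fun j => ¬ U ≤ X j)) ∩ (Finset.univ.filter (fun j => ¬ W ≤ X j)) := by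
    intro j hj
    simp only [Finset.mem_filter, Finset.mem_univ, true_and, Finset.mem_inter] at hj ⊢
    exact ⟨fun hU => hj (le_trans inf_le_left hU), fun hW => hj (le_trans inf_le_right hW)⟩
  calc (Finset.univ.filter (fun j => ¬ U ⊔ W ≤ X j)).card
        + (Finset.univ.filter (fun j => ¬ U ⊓ W ≤ X j)).card
      ≤ ((Finset.univ.filter (fun j => ¬ U ≤ X j)) ∪ (Finset.univ.filter (fun j => ¬ W ≤ X j))).card
        + ((Finset.univ.filter (fun j => ¬ U ≤ X j)) ∩ (Finset.univ.filter (fun j => ¬ W ≤ X j))).card :=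
        Nat.add_le_add (Finset.card_le_card h1) (Finset.card_le_card h2)
    _ = _ := Finset.card_union_add_card_inter _ _

/-- The Hall-type characterization of partial q-transversals. -/
lemma qtransversal_iff (T : Submodule F V) :
    IsPartialQTransversal X T ↔ ∀ U ≤ T, finrank F U ≤ qdef X U := by
  classical
  constructor
  · -- forward direction: extend a basis of `U` to a basis of `T`
    intro h U hUT
    set W : Submodule F T := Submodule.comap T.subtype U with hW
    obtain ⟨Wc, hc⟩ := Submodule.exists_isCompl W
    set k := finrank F W with hk
    set l := finrank F Wc with hl
    have hkU : k = finrank F U :=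
      LinearEquiv.finrank_eq (Submodule.comapSubtypeEquivOfLe hUT)
    let c : Basis (Fin k) F W := Module.finBasis F W
    let d : Basis (Fin l) F Wc := Module.finBasis F Wc
    let e : (W × Wc) ≃ₗ[F] T := Submodule.prodEquivOfIsCompl W Wc hc
    let B : Basis (Fin k ⊕ Fin l) F T := (c.prod d).map e
    let b : Fin (k + l) → V := fun i => (B (finSumFinEquiv.symm i) : V)
    have hbli : LinearIndependent F b := by
      have h1 : LinearIndependent F (fun i => (B i : V)) :=
        B.linearIndependent.map' T.subtype T.ker_subtype
      exact h1.comp finSumFinEquiv.symm finSumFinEquiv.symm.injective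
    have hbspan : Submodule.span F (Set.range b) = T := by
      have hr : Set.range b = T.subtype '' (Set.range B) := by
        ext x
        constructor
        · rintro ⟨i, rfl⟩; exact ⟨B (finSumFinEquiv.symm i), ⟨_, rfl⟩, rfl⟩
        · rintro ⟨y, ⟨i, rfl⟩, rfl⟩; exact ⟨finSumFinEquiv i, by simp [b]⟩
      rw [hr, ← Submodule.map_span, B.span_eq, Submodule.map_subtype_top]
    obtain ⟨σ, hσinj, hσ⟩ := h (k + l) b hbli hbspan
    -- the basis vectors coming from `W` lie in `U`
    have hmem : ∀ j : Fin k, b (finSumFinEquiv (Sum.inl j)) ∈ U := by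
      intro j
      have : b (finSumFinEquiv (Sum.inl j)) = ((B (Sum.inl j) : T) : V) := by
        simp [b]
      rw [this]
      have hB : (B (Sum.inl j) : T) = e ((c.prod d) (Sum.inl j)) := rfl
      have hcd : (c.prod d) (Sum.inl j) = (c j, 0) := by
        ext
        · simp [Basis.prod_apply_inl_fst]
        · simp [Basis.prod_apply_inl_snd]
      have : ((B (Sum.inl j) : T) : V) = ((c j : T) : V) := by
        rw [hB, hcd]
        simp [e, Submodule.coe_prodEquivOfIsCompl']
      rw [this]
      exact (c j).2
    let τ : Fin k → {j : Fin n // j ∈ Finset.univ.filter (fun j => ¬ U ≤ X j)} := fun j =>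
      ⟨σ (finSumFinEquiv (Sum.inl j)), by
        simp only [Finset.mem_filter, Finset.mem_univ, true_and]
        intro hle
        exact hσ (finSumFinEquiv (Sum.inl j)) (hle (hmem j))⟩
    have hτ : Function.Injective τ := by
      intro a b hab
      have := hσinj (congrArg Subtype.val hab)
      have := finSumFinEquiv.injective this
      exact Sum.inl_injective this
    have hfin := Fintype.card_le_of_injective τ hτ
    rw [Fintype.card_fin, Fintype.card_coe] at hfin
    rw [← hkU]
    exact hfin
  · -- backward direction: Hall's theorem
    intro h m b hli hsp
    let t : Fin m → Finset (Fin n) := fun i => Finset.univ.filter (fun j => b i ∉ X j)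
    have hall : ∀ s : Finset (Fin m), s.card ≤ (s.biUnion t).card := by
      intro s
      set U : Submodule F V := Submodule.span F (b '' s) with hU
      have hUT : U ≤ T := by
        rw [hU, ← hsp]
        exact Submodule.span_mono (by rintro x ⟨i, _, rfl⟩; exact ⟨i, rfl⟩)
      have hcard : finrank F U = s.card := by
        have hli' : LinearIndependent F (fun i : {x // x ∈ s} => b i) :=
          hli.comp Subtype.val Subtype.val_injective
        have hr : Set.range (fun i : {x // x ∈ s} => b i) = b '' s := by
          ext x; simp [Set.mem_image]
        have := finrank_span_eq_card hli'
        rw [hr] at this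
        rw [hU, this, Fintype.card_coe]
      have hsub : (Finset.univ.filter (fun j => ¬ U ≤ X j)) ⊆ s.biUnion t := by
        intro j hj
        simp only [Finset.mem_filter, Finset.mem_univ, true_and] at hj
        by_contra hns
        apply hj
        rw [hU]
        apply Submodule.span_le.2
        rintro x ⟨i, hi, rfl⟩
        by_contra hbx
        exact hns (Finset.mem_biUnion.2 ⟨i, hi, by
          simp only [t, Finset.mem_filter, Finset.mem_univ, true_and]
          exact hbx⟩)
      calc s.card = finrank F U := hcard.symm
        _ ≤ qdef X U := h U hUT
        _ ≤ (s.biUnion t).card := Finset.card_le_card hsub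
    obtain ⟨σ, hσinj, hσ⟩ := (Finset.all_card_le_biUnion_card_iff_exists_injective t).1 hall
    refine ⟨σ, hσinj, fun i => ?_⟩
    have := hσ i
    simpa [t] using this

end Aux

/-- The partial q-transversals of a family `X = (X 1, …, X n)` of subspaces of `V` are
the independent subspaces of a q-matroid on `V`: there is a rank function `r` satisfying
the q-matroid axioms such that `r T = dim T` exactly for the partial q-transversals. -/
theorem qtransversals_form_qmatroid {F V : Type*} [Field F] [Fintype F]
    [AddCommGroup V] [Module F V] [FiniteDimensional F V]
    (n : ℕ) (X : Fin n → Submodule F V) :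
    ∃ r : Submodule F V → ℤ,
      (∀ A : Submodule F V, 0 ≤ r A) ∧
      (∀ A : Submodule F V, r A ≤ Module.finrank F A) ∧
      (∀ A B : Submodule F V, A ≤ B → r A ≤ r B) ∧
      (∀ A B : Submodule F V, r (A ⊔ B) + r (A ⊓ B) ≤ r A + r B) ∧
      (∀ T : Submodule F V,
        (r T = Module.finrank F T ↔ IsPartialQTransversal X T)) := by
  classical
  open Module in
  -- the candidate rank sets
  set S : Submodule F V → Set ℤ := fun A =>
    {z : ℤ | ∃ U : Submodule F V, U ≤ A ∧
      z = (qdef X U : ℤ) + (finrank F A : ℤ) - (finrank F U : ℤ)} with hS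
  have hSne : ∀ A, (S A).Nonempty := fun A =>
    ⟨(qdef X ⊥ : ℤ) + (finrank F A : ℤ) - (finrank F (⊥ : Submodule F V) : ℤ),
      ⊥, bot_le, rfl⟩
  have hSbdd : ∀ A, BddBelow (S A) := by
    intro A
    refine ⟨0, fun z hz => ?_⟩
    obtain ⟨U, hUA, rfl⟩ := hz
    have h1 : (finrank F U : ℤ) ≤ (finrank F A : ℤ) :=
      Int.ofNat_le.2 (Submodule.finrank_mono hUA)
    have h2 : (0 : ℤ) ≤ (qdef X U : ℤ) := Int.ofNat_nonneg _
    omega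
  set r : Submodule F V → ℤ := fun A => sInf (S A) with hr
  have hr_mem : ∀ A, r A ∈ S A := fun A => Int.csInf_mem (hSne A) (hSbdd A)
  have hr_le : ∀ A z, z ∈ S A → r A ≤ z := fun A z hz => csInf_le (hSbdd A) hz
  refine ⟨r, ?_, ?_, ?_, ?_, ?_⟩
  · -- nonnegativity
    intro A
    obtain ⟨U, hUA, hEq⟩ := hr_mem A
    have h1 : (finrank F U : ℤ) ≤ (finrank F A : ℤ) :=
      Int.ofNat_le.2 (Submodule.finrank_mono hUA)
    have h2 : (0 : ℤ) ≤ (qdef X U : ℤ) := Int.ofNat_nonneg _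
    omega
  · -- bounded by dimension
    intro A
    have : ((qdef X ⊥ : ℤ) + (finrank F A : ℤ) - (finrank F (⊥ : Submodule F V) : ℤ)) ∈ S A :=
      ⟨⊥, bot_le, rfl⟩
    have h := hr_le A _ this
    rw [qdef_bot] at h
    simpa using h
  · -- monotone
    intro A B hAB
    obtain ⟨U, hUB, hEq⟩ := hr_mem B
    have hmem : ((qdef X (U ⊓ A) : ℤ) + (finrank F A : ℤ) - (finrank F ↥(U ⊓ A) : ℤ)) ∈ S A :=
      ⟨U ⊓ A, inf_le_right, rfl⟩
    have h1 := hr_le A _ hmem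
    have h2 : (qdef X (U ⊓ A) : ℤ) ≤ (qdef X U : ℤ) :=
      Int.ofNat_le.2 (qdef_mono X inf_le_left)
    -- modularity: dim A - dim (U ⊓ A) ≤ dim B - dim U
    have hmod : finrank F ↥(U ⊔ A) + finrank F ↥(U ⊓ A) = finrank F U + finrank F A :=
      Submodule.finrank_sup_add_finrank_inf_eq U A
    have hle : finrank F ↥(U ⊔ A) ≤ finrank F B :=
      Submodule.finrank_mono (sup_le hUB hAB)
    have : (finrank F A : ℤ) - (finrank F ↥(U ⊓ A) : ℤ)
        ≤ (finrank F B : ℤ) - (finrank F U : ℤ) := by omega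
    omega
  · -- submodular
    intro A B
    obtain ⟨U, hUA, hU⟩ := hr_mem A
    obtain ⟨W, hWB, hW⟩ := hr_mem B
    have hm1 : ((qdef X (U ⊔ W) : ℤ) + (finrank F ↥(A ⊔ B) : ℤ) - (finrank F ↥(U ⊔ W) : ℤ)) ∈ S (A ⊔ B) :=
      ⟨U ⊔ W, sup_le_sup hUA hWB, rfl⟩
    have hm2 : ((qdef X (U ⊓ W) : ℤ) + (finrank F ↥(A ⊓ B) : ℤ) - (finrank F ↥(U ⊓ W) : ℤ)) ∈ S (A ⊓ B) :=
      ⟨U ⊓ W, inf_le_inf hUA hWB, rfl⟩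
    have h1 := hr_le _ _ hm1
    have h2 := hr_le _ _ hm2
    have hsub : (qdef X (U ⊔ W) : ℤ) + (qdef X (U ⊓ W) : ℤ) ≤ (qdef X U : ℤ) + (qdef X W : ℤ) := by
      have := qdef_submodular X U W
      omega
    have hmodU : finrank F ↥(U ⊔ W) + finrank F ↥(U ⊓ W) = finrank F U + finrank F W :=
      Submodule.finrank_sup_add_finrank_inf_eq U W
    have hmodA : finrank F ↥(A ⊔ B) + finrank F ↥(A ⊓ B) = finrank F A + finrank F B :=
      Submodule.finrank_sup_add_finrank_inf_eq A B
    omega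
  · -- characterization of full-rank subspaces
    intro T
    rw [qtransversal_iff X T]
    constructor
    · intro hrT U hUT
      have hmem : ((qdef X U : ℤ) + (finrank F T : ℤ) - (finrank F U : ℤ)) ∈ S T :=
        ⟨U, hUT, rfl⟩
      have := hr_le T _ hmem
      rw [hrT] at this
      exact_mod_cast by omega
    · intro h
      have hub : r T ≤ (finrank F T : ℤ) := by
        have : ((qdef X ⊥ : ℤ) + (finrank F T : ℤ) - (finrank F (⊥ : Submodule F V) : ℤ)) ∈ S T :=
          ⟨⊥, bot_le, rfl⟩
        have h' := hr_le T _ this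
        rw [qdef_bot] at h'
        simpa using h'
      have hlb : (finrank F T : ℤ) ≤ r T := by
        apply le_csInf (hSne T)
        rintro z ⟨U, hUT, rfl⟩
        have := h U hUT
        omega
      omega
end

section
/- Let V be a finite-dimensional vector space over a finite field F, let X = (X_1,...,X_n) be a family of subspaces of V, and for subspaces Y ≤ V define f(Y) to be the number of indices i ∈ {1,...,n} with Y not contained in X_i. Then a subspace T ≤ V is a partial q-transversal of X if and only if f(Y) ≥ dim Y for every subspace Y ≤ T. -/
open Finset Function Module Submodule

section

variable {F V ι : Type*} [Field F] [AddCommGroup V] [Module F V]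
  {X : ι → Submodule F V} {T : Submodule F V}

theorem IsPartialQTransversal.exists_injective (hT : IsPartialQTransversal X T)
    {κ : Type*} [Finite κ] {b : κ → V} (hb : LinearIndependent F b)
    (hspan : span F (Set.range b) = T) :
    ∃ σ : κ → ι, Injective σ ∧ ∀ k, b k ∉ X (σ k) := by
  obtain ⟨m, ⟨e⟩⟩ := Finite.exists_equiv_fin κ
  obtain ⟨σ, hσ, hbσ⟩ := hT m (b ∘ e.symm) (hb.comp _ e.symm.injective)
    (by rwa [Set.range_comp, e.symm.range_eq_univ, Set.image_univ])
  exact ⟨σ ∘ e, hσ.comp e.injective, fun k => by simpa using hbσ (e k)⟩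

theorem finrank_span_set_eq_natCard {s : Set V} (hs : LinearIndepOn F id s) :
    finrank F (span F s) = Nat.card s := by
  rw [finrank, rank_span_set hs]
  rfl

theorem IsPartialQTransversal.finrank_le_card [FiniteDimensional F V] [Finite ι]
    (hT : IsPartialQTransversal X T) {Y : Submodule F V} (hYT : Y ≤ T) :
    finrank F Y ≤ Nat.card {i // ¬ Y ≤ X i} := by
  obtain ⟨s, hsY, hspan_s, hs⟩ := exists_linearIndependent F (Y : Set V)
  obtain ⟨t, htT, hst, hTt, ht⟩ := exists_linearIndepOn_id_extension hs (hsY.trans hYT)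
  have : Finite t := LinearIndependent.finite ht
  obtain ⟨σ, hσ, hσt⟩ := hT.exists_injective ht
    (by simpa using span_eq_of_le T htT hTt)
  let g : s → {i // ¬ Y ≤ X i} := fun x => ⟨σ ⟨x, hst x.2⟩, fun h => hσt _ (h (hsY x.2))⟩
  have hg : Injective g := fun x y hxy =>
    Subtype.ext (by simpa [g] using hσ (congrArg Subtype.val hxy))
  calc finrank F Y = Nat.card s := by rw [← finrank_span_set_eq_natCard hs, hspan_s, span_eq]
    _ ≤ _ := Nat.card_le_card_of_injective g hg

theorem isPartialQTransversal_of_forall_finrank_le [Finite ι]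
    (h : ∀ Y ≤ T, finrank F Y ≤ Nat.card {i // ¬ Y ≤ X i}) : IsPartialQTransversal X T := by
  classical
  have := Fintype.ofFinite ι
  intro m b hb hspan
  refine (Fintype.all_card_le_filter_rel_iff_exists_injective fun k i => b k ∉ X i).mp fun S => ?_
  have hYT : span F (b '' S) ≤ T := hspan ▸ span_mono (Set.image_subset_range b S)
  have hrank : finrank F (span F (b '' S)) = #S := by
    rw [Set.image_eq_range, ← Fintype.card_coe]
    exact finrank_span_eq_card (hb.comp ((↑) : S → Fin m) Subtype.val_injective)
  calc #S = finrank F (span F (b '' S)) := hrank.symm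
    _ ≤ Nat.card {i // ¬ span F (b '' S) ≤ X i} := h _ hYT
    _ = _ := by
      rw [Nat.card_eq_fintype_card, Fintype.card_subtype]
      congr! with i
      simp [span_le, Set.image_subset_iff, Set.not_subset]

end

theorem isPartialQTransversal_iff_submodular_bound_general {F V : Type*} [Field F]
    [AddCommGroup V] [Module F V] [FiniteDimensional F V]
    (n : ℕ) (X : Fin n → Submodule F V)
    (f : Submodule F V → ℕ)
    (hf : ∀ Y : Submodule F V, f Y = Nat.card {i : Fin n // ¬ Y ≤ X i})
    (T : Submodule F V) :
    IsPartialQTransversal X T ↔ ∀ Y : Submodule F V, Y ≤ T → Module.finrank F Y ≤ f Y := by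
  simp only [hf]
  exact ⟨fun hT _ => hT.finrank_le_card, isPartialQTransversal_of_forall_finrank_le⟩

/-- With `f Y` the number of indices `i` such that `Y` is not contained in `X i`, a
subspace `T` is a partial q-transversal of `X = (X 1, …, X n)` iff `f Y ≥ dim Y`
for every subspace `Y ≤ T`. -/
theorem isPartialQTransversal_iff_submodular_bound {F V : Type*} [Field F] [Fintype F]
    [AddCommGroup V] [Module F V] [FiniteDimensional F V]
    (n : ℕ) (X : Fin n → Submodule F V)
    (f : Submodule F V → ℕ)
    (hf : ∀ Y : Submodule F V, f Y = Nat.card {i : Fin n // ¬ Y ≤ X i})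
    (T : Submodule F V) :
    IsPartialQTransversal X T ↔ ∀ Y : Submodule F V, Y ≤ T → Module.finrank F Y ≤ f Y :=
  isPartialQTransversal_iff_submodular_bound_general n X f hf T
end

section
/- Let V be a finite-dimensional vector space over a finite field F and let X = (X_1,...,X_n) be a family of subspaces of V. Then X has a q-transversal if and only if for every nonempty subset J ⊆ {1,...,n} we have dim(⋂_{j∈J} X_j) + |J| ≤ dim V. (q-analog of Hall's theorem.) -/
/-!
A subspace `T` with `dim T = n` is a q-transversal iff `dim (T ⊓ X(J)) + |J| ≤ n` for every `J`:
a basis of `T` extending one of `T ⊓ X(J)` must send the latter's vectors outside `J`, and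
conversely Hall's marriage theorem applies to the sets `{j | b i ∉ X j}` attached to a basis `b`.
Such a `T` exists under the dimension hypothesis by duality: the annihilators `X_j^⊥` satisfy
Rado's condition `|J| ≤ dim (∑_{j ∈ J} X_j^⊥)`, so by Rado's theorem for subspaces there are
independent functionals `φ_j ∈ X_j^⊥`, and `T` can be taken to be the image of a linear section
of `(φ_j)_j : V → F^n`.
Rado's theorem follows by shrinking the subspaces: if `dim W_j ≥ 2`, write `W_j = A ⊔ B` with
`A, B < W_j`; if both replacements of `W_j` violated Rado's condition, on sets `J₁, J₂ ∋ j`,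
submodularity of `finrank` would make `W` violate it on `J₁ ∪ J₂` or on `J₁ ∩ J₂`.
-/

/-- `T` is a q-transversal of the family `X` indexed by the finite type `ι`: `T` has
dimension equal to the number of indices, and every (vector-space) basis of `T` admits a
bijective assignment `σ` onto the index set with `b i ∉ X (σ i)` for all `i`. -/
def IsQTransversal {F V ι : Type*} [Field F] [AddCommGroup V] [Module F V] [Fintype ι]
    (X : ι → Submodule F V) (T : Submodule F V) : Prop :=
  Module.finrank F T = Fintype.card ι ∧
  ∀ (m : ℕ) (b : Fin m → V), LinearIndependent F b → Submodule.span F (Set.range b) = T →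
    ∃ σ : Fin m → ι, Function.Bijective σ ∧ ∀ i, b i ∉ X (σ i)

section
open Module Submodule Function

variable {F V ι : Type*} [Field F] [AddCommGroup V] [Module F V]

namespace Finset

variable {α : Type*} [SemilatticeSup α] [OrderBot α] [DecidableEq ι] {J : Finset ι} {j : ι}

theorem sup_update_of_notMem (h : j ∉ J) (f : ι → α) (a : α) :
    J.sup (update f j a) = J.sup f :=
  sup_congr rfl fun _ hi => update_of_ne (ne_of_mem_of_not_mem hi h) a f

theorem sup_update_of_mem (h : j ∈ J) (f : ι → α) (a : α) :
    J.sup (update f j a) = a ⊔ (J.erase j).sup f := by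
  conv_lhs => rw [← insert_erase h]
  rw [sup_insert, update_self, sup_update_of_notMem (notMem_erase j J)]

end Finset

theorem Basis.sumExtend_apply_inl {v : ι → V} (hv : LinearIndependent F v) (i : ι) :
    Basis.sumExtend hv (Sum.inl i) = v i := by
  simp only [Basis.sumExtend, Basis.reindex_apply, Basis.coe_extend]
  rfl

theorem LinearIndependent.finset_card_le_finrank_of_mem {κ : Type*} {b : κ → V}
    (hb : LinearIndependent F b) {S : Finset κ} {p : Submodule F V} [FiniteDimensional F p]
    (h : ∀ i ∈ S, b i ∈ p) : S.card ≤ finrank F p := by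
  have hb' : LinearIndependent F fun i : S => (⟨b i, h i i.2⟩ : p) :=
    (hb.comp _ Subtype.val_injective).of_comp p.subtype
  simpa using hb'.fintype_card_le_finrank

namespace Submodule

theorem exists_span_singleton_eq_of_finrank_eq_one {W : Submodule F V} (hW : finrank F W = 1) :
    ∃ w, F ∙ w = W := by
  have : Module.Finite F W := Module.finite_of_finrank_eq_succ hW
  obtain ⟨w, hwW, hw⟩ := exists_mem_ne_zero_of_ne_bot (p := W) (by rintro rfl; simp at hW)
  exact ⟨w, eq_of_le_of_finrank_eq ((span_singleton_le_iff_mem _ _).2 hwW)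
    (by rw [finrank_span_singleton hw, hW])⟩

theorem exists_lt_lt_sup_eq_of_one_lt_finrank {W : Submodule F V} (hW : 1 < finrank F W) :
    ∃ A B, A < W ∧ B < W ∧ A ⊔ B = W := by
  have : Module.Finite F W := Module.finite_of_finrank_pos (by omega)
  have : Nontrivial W := Module.nontrivial_of_finrank_pos (R := F) (by omega)
  obtain ⟨x, hx⟩ := exists_ne (0 : W)
  obtain ⟨B, hB⟩ := exists_isCompl (F ∙ x)
  have hA : F ∙ x < ⊤ := lt_top_iff_ne_top.2 fun h => by
    have := finrank_span_singleton (K := F) hx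
    rw [h, finrank_top] at this
    omega
  have hB' : B < ⊤ := lt_top_iff_ne_top.2 fun h =>
    hx (disjoint_def.1 hB.disjoint x (mem_span_singleton_self x) (h ▸ mem_top))
  have hmap := map_strictMono_of_injective W.injective_subtype
  refine ⟨_, _, map_subtype_top W ▸ hmap hA, map_subtype_top W ▸ hmap hB', ?_⟩
  rw [← map_sup, hB.sup_eq_top, map_subtype_top]

end Submodule

theorem Subspace.dualAnnihilator_finset_inf (J : Finset ι) (X : ι → Subspace F V) :
    (J.inf X).dualAnnihilator = J.sup fun j => (X j).dualAnnihilator := by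
  classical
  induction J using Finset.induction_on with
  | empty => simp
  | insert j J _ ih =>
    rw [Finset.inf_insert, Finset.sup_insert, Subspace.dualAnnihilator_inf_eq, ih]

theorem LinearMap.pi_surjective_of_linearIndependent [Fintype ι] {φ : ι → Dual F V}
    (hφ : LinearIndependent F φ) : Surjective (LinearMap.pi φ) := by
  classical
  rw [← LinearMap.dualMap_injective_iff, injective_iff_map_eq_zero]
  intro ψ hψ
  have hψ_apply : ∀ x : ι → F, ψ x = ∑ i, x i • ψ (Pi.single i 1) := fun x => by
    conv_lhs => rw [← Finset.univ_sum_single x]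
    rw [map_sum]
    refine Finset.sum_congr rfl fun i _ => ?_
    rw [← map_smul, ← Pi.single_smul', smul_eq_mul, mul_one]
  have hcoeff := Fintype.linearIndependent_iff.1 hφ (fun i => ψ (Pi.single i 1)) <| by
    ext v
    have hv := LinearMap.congr_fun hψ v
    rw [LinearMap.dualMap_apply, hψ_apply] at hv
    simp only [LinearMap.pi_apply, smul_eq_mul, LinearMap.zero_apply] at hv
    simpa only [LinearMap.sum_apply, LinearMap.smul_apply, smul_eq_mul, LinearMap.zero_apply,
      mul_comm] using hv
  refine LinearMap.pi_ext fun i c => ?_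
  rw [hψ_apply]
  simp [hcoeff]

def RadoCondition (W : ι → Submodule F V) : Prop :=
  ∀ J : Finset ι, J.card ≤ finrank F ↥(J.sup W)

namespace RadoCondition

variable {W : ι → Submodule F V}

theorem exists_finrank_sup_le_of_not_update [DecidableEq ι] (hW : RadoCondition W) {j : ι}
    {A : Submodule F V} (hA : ¬RadoCondition (update W j A)) :
    ∃ I : Finset ι, j ∉ I ∧ finrank F ↥(A ⊔ I.sup W) ≤ I.card := by
  simp only [RadoCondition, not_forall, not_le] at hA
  obtain ⟨J, hJ⟩ := hA
  have hj : j ∈ J := by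
    by_contra hj
    rw [Finset.sup_update_of_notMem hj] at hJ
    exact (hW J).not_gt hJ
  rw [Finset.sup_update_of_mem hj, ← Finset.card_erase_add_one hj] at hJ
  exact ⟨J.erase j, Finset.notMem_erase j J, Nat.lt_succ_iff.1 hJ⟩

theorem update_or_update [FiniteDimensional F V] [DecidableEq ι] (hW : RadoCondition W) {j : ι}
    {A B : Submodule F V} (hAB : A ⊔ B = W j) :
    RadoCondition (update W j A) ∨ RadoCondition (update W j B) := by
  by_contra! h
  obtain ⟨I₁, hj₁, h₁⟩ := hW.exists_finrank_sup_le_of_not_update h.1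
  obtain ⟨I₂, hj₂, h₂⟩ := hW.exists_finrank_sup_le_of_not_update h.2
  have hsup : (A ⊔ I₁.sup W) ⊔ (B ⊔ I₂.sup W) = (insert j (I₁ ∪ I₂)).sup W := by
    rw [Finset.sup_insert, Finset.sup_union, ← hAB, sup_sup_sup_comm]
  have hinf : (I₁ ∩ I₂).sup W ≤ (A ⊔ I₁.sup W) ⊓ (B ⊔ I₂.sup W) :=
    le_inf ((Finset.sup_mono Finset.inter_subset_left).trans le_sup_right)
      ((Finset.sup_mono Finset.inter_subset_right).trans le_sup_right)
  have hunion := hW (insert j (I₁ ∪ I₂))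
  rw [Finset.card_insert_of_notMem (by simp [hj₁, hj₂]), ← hsup] at hunion
  have hinter := (hW (I₁ ∩ I₂)).trans (finrank_mono hinf)
  have := finrank_sup_add_finrank_inf_eq (A ⊔ I₁.sup W) (B ⊔ I₂.sup W)
  have := Finset.card_union_add_card_inter I₁ I₂
  omega

theorem linearIndependent_of_span_singleton_eq [Fintype ι] (hW : RadoCondition W) {w : ι → V}
    (hw : ∀ j, F ∙ w j = W j) : LinearIndependent F w := by
  rw [linearIndependent_iff_card_le_finrank_span, Set.finrank, span_range_eq_iSup,
    iSup_congr hw, ← Finset.sup_univ_eq_iSup, ← Finset.card_univ]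
  exact hW Finset.univ

theorem exists_linearIndependent [FiniteDimensional F V] [Fintype ι] (hW : RadoCondition W) :
    ∃ w : ι → V, LinearIndependent F w ∧ ∀ j, w j ∈ W j := by
  classical
  induction W using WellFoundedLT.induction with
  | ind W ih =>
  by_cases hlarge : ∃ j, 1 < finrank F (W j)
  · obtain ⟨j, hj⟩ := hlarge
    obtain ⟨A, B, hA, hB, hAB⟩ := exists_lt_lt_sup_eq_of_one_lt_finrank hj
    have shrink : ∀ C < W j, RadoCondition (update W j C) →
        ∃ w : ι → V, LinearIndependent F w ∧ ∀ i, w i ∈ W i := by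
      intro C hC hWC
      obtain ⟨w, hli, hw⟩ := ih _ (update_lt_self_iff.2 hC) hWC
      exact ⟨w, hli, fun i => (update_le_self_iff.2 hC.le : update W j C ≤ W) i (hw i)⟩
    exact (hW.update_or_update hAB).elim (shrink A hA) (shrink B hB)
  · push Not at hlarge
    have hline : ∀ j, ∃ w, F ∙ w = W j := fun j =>
      exists_span_singleton_eq_of_finrank_eq_one (le_antisymm (hlarge j) (by simpa using hW {j}))
    choose w hw using hline
    exact ⟨w, hW.linearIndependent_of_span_singleton_eq hw,
      fun j => hw j ▸ mem_span_singleton_self (w j)⟩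

end RadoCondition

theorem radoCondition_dualAnnihilator [FiniteDimensional F V] {X : ι → Submodule F V}
    (h : ∀ J : Finset ι, finrank F ↥(J.inf X) + J.card ≤ finrank F V) :
    RadoCondition fun j => (X j).dualAnnihilator := by
  intro J
  have := Subspace.finrank_add_finrank_dualAnnihilator_eq (J.inf X)
  rw [Subspace.dualAnnihilator_finset_inf] at this
  have := h J
  omega

theorem exists_finrank_inf_add_card_le_of_surjective [FiniteDimensional F V] [Fintype ι]
    {X : ι → Submodule F V} (Φ : V →ₗ[F] ι → F) (hΦ : Surjective Φ)
    (hX : ∀ j, ∀ v ∈ X j, Φ v j = 0) :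
    ∃ T : Submodule F V, finrank F T = Fintype.card ι ∧
      ∀ J : Finset ι, finrank F ↥(T ⊓ J.inf X) + J.card ≤ Fintype.card ι := by
  obtain ⟨s, hs⟩ := Φ.exists_rightInverse_of_surjective (LinearMap.range_eq_top.2 hΦ)
  have hs_inj : Injective s := LeftInverse.injective (g := Φ) (LinearMap.congr_fun hs)
  refine ⟨LinearMap.range s, by
    rw [LinearMap.finrank_range_of_inj hs_inj, Module.finrank_fintype_fun_eq_card], fun J => ?_⟩
  let R : (ι → F) →ₗ[F] (J → F) := LinearMap.funLeft F F (↑)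
  have hR : finrank F (LinearMap.ker R) + J.card = Fintype.card ι := by
    have := LinearMap.finrank_range_add_finrank_ker R
    rw [LinearMap.range_eq_top.2 (LinearMap.funLeft_surjective_of_injective F F _
      Subtype.val_injective), finrank_top, Module.finrank_fintype_fun_eq_card,
      Fintype.card_coe, Module.finrank_fintype_fun_eq_card] at this
    omega
  have hle : LinearMap.range s ⊓ J.inf X ≤ (LinearMap.ker R).map s := by
    rintro _ ⟨⟨f, rfl⟩, hf⟩
    refine ⟨f, ?_, rfl⟩
    ext ⟨j, hj⟩
    have := hX j _ (mem_finsetInf.1 hf j hj)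
    rwa [← LinearMap.comp_apply, hs, LinearMap.id_apply] at this
  have := (finrank_mono hle).trans (finrank_map_le s (LinearMap.ker R))
  omega

theorem exists_finrank_inf_add_card_le [FiniteDimensional F V] [Fintype ι]
    {X : ι → Submodule F V} (h : ∀ J : Finset ι, finrank F ↥(J.inf X) + J.card ≤ finrank F V) :
    ∃ T : Submodule F V, finrank F T = Fintype.card ι ∧
      ∀ J : Finset ι, finrank F ↥(T ⊓ J.inf X) + J.card ≤ Fintype.card ι := by
  obtain ⟨φ, hφ, hφX⟩ := (radoCondition_dualAnnihilator h).exists_linearIndependent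
  exact exists_finrank_inf_add_card_le_of_surjective (LinearMap.pi φ)
    (LinearMap.pi_surjective_of_linearIndependent hφ) fun j => (mem_dualAnnihilator _).1 (hφX j)

namespace IsQTransversal

variable [Fintype ι] {X : ι → Submodule F V} {T : Submodule F V}

theorem exists_equiv_of_basis [FiniteDimensional F V] (hT : IsQTransversal X T) {κ : Type*}
    (b : Basis κ F T) : ∃ σ : κ ≃ ι, ∀ i, (b i : V) ∉ X (σ i) := by
  have := Module.Finite.finite_basis b
  have := Fintype.ofFinite κ
  let e := Fintype.equivFin κ
  obtain ⟨σ, hσ, hσX⟩ := hT.2 _ (T.subtype ∘ b ∘ e.symm)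
    ((b.linearIndependent.map' T.subtype T.ker_subtype).comp _ e.symm.injective)
    (by rw [Set.range_comp, e.symm.surjective.range_comp, span_image, b.span_eq,
      map_subtype_top])
  exact ⟨e.trans (Equiv.ofBijective σ hσ), fun i => by simpa using hσX (e i)⟩

theorem finrank_inf_add_card_le [FiniteDimensional F V] (hT : IsQTransversal X T)
    (J : Finset ι) : finrank F ↥(T ⊓ J.inf X) + J.card ≤ Fintype.card ι := by
  classical
  let S : Submodule F T := (T ⊓ J.inf X).comap T.subtype
  have hv : LinearIndependent F fun i => (finBasis F S i : T) :=
    (finBasis F S).linearIndependent.map' S.subtype S.ker_subtype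
  obtain ⟨σ, hσ⟩ := hT.exists_equiv_of_basis (Basis.sumExtend hv)
  have hσJ : ∀ i, σ (Sum.inl i) ∈ Jᶜ := fun i => Finset.mem_compl.2 fun hJ => by
    refine hσ (Sum.inl i) (mem_finsetInf.1 ?_ _ hJ)
    rw [Basis.sumExtend_apply_inl]
    exact (finBasis F S i).2.2
  have hk := Finset.card_le_card_of_injOn (s := .univ) _ (fun i _ => hσJ i)
    (σ.injective.comp Sum.inl_injective).injOn
  rw [Finset.card_univ, Fintype.card_fin, Finset.card_compl,
    (comapSubtypeEquivOfLe inf_le_left).finrank_eq] at hk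
  have := J.card_le_univ
  omega

theorem of_finrank_inf_add_card_le [FiniteDimensional F V] (hT : finrank F T = Fintype.card ι)
    (h : ∀ J : Finset ι, finrank F ↥(T ⊓ J.inf X) + J.card ≤ Fintype.card ι) :
    IsQTransversal X T := by
  classical
  refine ⟨hT, fun m b hb hspan => ?_⟩
  have hm : m = Fintype.card ι := by
    rw [← hT, ← hspan, finrank_span_eq_card hb, Fintype.card_fin]
  let t : Fin m → Finset ι := fun i => {j | b i ∉ X j}
  have hall : ∀ S : Finset (Fin m), S.card ≤ (S.biUnion t).card := by
    intro S
    let J : Finset ι := {j | ∀ i ∈ S, b i ∈ X j}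
    have hcompl : S.biUnion t = Jᶜ := by
      ext j
      simp [t, J]
    have hS : S.card ≤ finrank F ↥(T ⊓ J.inf X) :=
      hb.finset_card_le_finrank_of_mem fun i hi =>
        ⟨hspan ▸ subset_span ⟨i, rfl⟩,
          mem_finsetInf.2 fun j hj => (Finset.mem_filter.1 hj).2 i hi⟩
    rw [hcompl, Finset.card_compl]
    have := h J
    omega
  obtain ⟨σ, hσ, hσX⟩ := (Finset.all_card_le_biUnion_card_iff_exists_injective t).1 hall
  exact ⟨σ, (Fintype.bijective_iff_injective_and_card σ).2 ⟨hσ, by simp [hm]⟩,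
    fun i => by simpa [t] using hσX i⟩

theorem finrank_finset_inf_add_card_le [FiniteDimensional F V] (hT : IsQTransversal X T)
    (J : Finset ι) : finrank F ↥(J.inf X) + J.card ≤ finrank F V := by
  have := hT.finrank_inf_add_card_le J
  have := finrank_sup_add_finrank_inf_eq T (J.inf X)
  have := finrank_le (T ⊔ J.inf X)
  have : finrank F T = Fintype.card ι := hT.1
  omega

end IsQTransversal

end

theorem qHall_general {F V : Type*} [Field F]
    [AddCommGroup V] [Module F V] [FiniteDimensional F V]
    (n : ℕ) (X : Fin n → Submodule F V) :
    (∃ T : Submodule F V, IsQTransversal X T) ↔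
    (∀ J : Finset (Fin n), J.Nonempty →
      Module.finrank F ↥(⨅ j ∈ J, X j) + J.card ≤ Module.finrank F V) := by
  constructor
  · rintro ⟨T, hT⟩ J -
    rw [← Finset.inf_eq_iInf]
    exact hT.finrank_finset_inf_add_card_le J
  · intro h
    obtain ⟨T, hT, hTX⟩ := exists_finrank_inf_add_card_le (X := X) fun J => by
      rcases J.eq_empty_or_nonempty with rfl | hJ
      · simpa using Submodule.finrank_le (Finset.inf ∅ X)
      · rw [Finset.inf_eq_iInf]
        exact h J hJ
    exact ⟨T, .of_finrank_inf_add_card_le hT hTX⟩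

/-- **q-analog of Hall's theorem.** The family `X = (X 1, …, X n)` of subspaces of `V`
has a q-transversal iff for every nonempty `J ⊆ {1,…,n}` we have
`dim (⋂_{j ∈ J} X j) + |J| ≤ dim V`. -/
theorem qHall {F V : Type*} [Field F] [Fintype F]
    [AddCommGroup V] [Module F V] [FiniteDimensional F V]
    (n : ℕ) (X : Fin n → Submodule F V) :
    (∃ T : Submodule F V, IsQTransversal X T) ↔
    (∀ J : Finset (Fin n), J.Nonempty →
      Module.finrank F ↥(⨅ j ∈ J, X j) + J.card ≤ Module.finrank F V) :=
  qHall_general n X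
end

section
/- Let V be a finite-dimensional vector space over a finite field F, let X = (X_1,...,X_k) be a family of subspaces of V, and let r be the maximum dimension of a partial q-transversal of X. Then there exists a subset J ⊆ {1,...,k} with |J| = r such that the partial q-transversals of the subfamily (X_j : j ∈ J) are exactly the partial q-transversals of X. -/
/-!
Hall's theorem applied to bases shows that `T` is a partial q-transversal of `(X j)_{j ∈ J}`
iff `dim W ≤ #N_J(W)` for all `W ≤ T`, where `N_J(W) = {j ∈ J | W ⊄ X j}`. Choose `J`
inclusion-minimal with the same independent spaces as the whole family, and call an independent
`W` tight if `dim W = #N_J(W)`. If some `j ∈ J` lay outside `N_J(W)` for every tight `W`,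
then `J \ {j}` would have the same independent spaces; so these neighbourhoods cover `J`. Two
tight spaces `A`, `B` merge into a tight `C ≤ A ⊔ B` with `N_J(C) = N_J(A) ∪ N_J(B)`, hence some
tight `W` has `N_J(W) = J`. Being independent of dimension `#J`, it forces `#J ≤ r`, while
`r ≤ #J` is clear. Merging rests on the fact that removing one index from `J` costs an
independent space at most one dimension.
-/

open Module Finset

namespace QTransversal

variable {F V ι : Type*} [Field F] [AddCommGroup V] [Module F V]

section Definitions

variable (X : ι → Submodule F V)

open Classical in
-- The analogue of the neighbourhood of a set of vertices in Hall's marriage theorem.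
noncomputable def nbhd (J : Finset ι) (W : Submodule F V) : Finset ι :=
  {j ∈ J | ¬W ≤ X j}

def HallIndep (J : Finset ι) (T : Submodule F V) : Prop :=
  ∀ W ≤ T, finrank F W ≤ #(nbhd X J W)

def IsTight (J : Finset ι) (W : Submodule F V) : Prop :=
  HallIndep X J W ∧ finrank F W = #(nbhd X J W)

noncomputable def hull (J : Finset ι) (H : Submodule F V) : Submodule F V :=
  ⨅ j ∈ J, ⨅ _ : H ≤ X j, X j

def IsPresentation [Fintype ι] (J : Finset ι) : Prop :=
  ∀ T : Submodule F V, HallIndep X J T ↔ HallIndep X univ T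

end Definitions

variable {X : ι → Submodule F V} {J : Finset ι} {A B T U W : Submodule F V}

section Neighbourhood

@[simp]
theorem mem_nbhd {j : ι} : j ∈ nbhd X J W ↔ j ∈ J ∧ ¬W ≤ X j := by
  classical simp [nbhd]

theorem nbhd_subset : nbhd X J W ⊆ J :=
  fun _ hj => (mem_nbhd.1 hj).1

theorem nbhd_mono_left {J' : Finset ι} (hJ : J ⊆ J') : nbhd X J W ⊆ nbhd X J' W :=
  fun _ hj => mem_nbhd.2 ⟨hJ (mem_nbhd.1 hj).1, (mem_nbhd.1 hj).2⟩

theorem nbhd_mono_right (h : U ≤ W) : nbhd X J U ⊆ nbhd X J W :=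
  fun _ hj => mem_nbhd.2 ⟨(mem_nbhd.1 hj).1, fun hW => (mem_nbhd.1 hj).2 (h.trans hW)⟩

@[simp]
theorem nbhd_bot : nbhd X J ⊥ = ∅ := by
  ext; simp

theorem nbhd_nbhd (h : W ≤ T) : nbhd X (nbhd X J T) W = nbhd X J W := by
  ext j; simp only [mem_nbhd]
  exact ⟨fun hj => ⟨hj.1.1, hj.2⟩, fun hj => ⟨⟨hj.1, fun hT => hj.2 (h.trans hT)⟩, hj.2⟩⟩

variable [DecidableEq ι]

theorem nbhd_sup : nbhd X J (A ⊔ B) = nbhd X J A ∪ nbhd X J B := by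
  ext; simp only [mem_nbhd, mem_union, sup_le_iff]; tauto

theorem nbhd_inf_subset : nbhd X J (A ⊓ B) ⊆ nbhd X J A ∩ nbhd X J B :=
  subset_inter (nbhd_mono_right inf_le_left) (nbhd_mono_right inf_le_right)

theorem nbhd_sdiff (S : Finset ι) : nbhd X (J \ S) W = nbhd X J W \ S := by
  ext; simp only [mem_nbhd, mem_sdiff]; tauto

theorem nbhd_erase (j : ι) : nbhd X (J.erase j) W = (nbhd X J W).erase j := by
  ext; simp only [mem_nbhd, mem_erase]; tauto

theorem card_nbhd_le_card_nbhd_erase_add_one (j : ι) :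
    #(nbhd X J W) ≤ #(nbhd X (J.erase j) W) + 1 := by
  rw [nbhd_erase]
  have := pred_card_le_card_erase (s := nbhd X J W) (a := j)
  omega

end Neighbourhood

theorem le_hull_iff : U ≤ hull X J W ↔ nbhd X J U ⊆ nbhd X J W := by
  simp only [hull, le_iInf_iff, subset_iff, mem_nbhd]
  exact ⟨fun h j hj => ⟨hj.1, fun hW => hj.2 (h j hj.1 hW)⟩,
    fun h j hj hW => by_contra fun hU => (h ⟨hj, hU⟩).2 hW⟩

theorem le_hull_self : W ≤ hull X J W :=
  le_hull_iff.2 subset_rfl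

section HallIndep

theorem HallIndep.of_le (hT : HallIndep X J T) (h : W ≤ T) : HallIndep X J W :=
  fun U hU => hT U (hU.trans h)

theorem HallIndep.mono_left {J' : Finset ι} (hT : HallIndep X J T) (hJ : J ⊆ J') :
    HallIndep X J' T :=
  fun W hW => (hT W hW).trans (card_le_card (nbhd_mono_left hJ))

theorem HallIndep.finrank_le (hT : HallIndep X J T) : finrank F T ≤ #(nbhd X J T) :=
  hT T le_rfl

theorem HallIndep.restrict_nbhd (hT : HallIndep X J T) : HallIndep X (nbhd X J T) T :=
  fun W hW => by rw [nbhd_nbhd hW]; exact hT W hW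

theorem hallIndep_bot : HallIndep X J ⊥ := by
  intro W hW
  rw [le_bot_iff.1 hW, finrank_bot]
  exact Nat.zero_le _

theorem isTight_bot : IsTight X J ⊥ :=
  ⟨hallIndep_bot, by simp⟩

theorem HallIndep.erase [DecidableEq ι] {j : ι} (hT : HallIndep X J T)
    (hj : ∀ W, IsTight X J W → j ∉ nbhd X J W) : HallIndep X (J.erase j) T := by
  intro W hW
  have hWJ := hT W hW
  by_cases htight : finrank F W = #(nbhd X J W)
  · rwa [nbhd_erase, erase_eq_of_notMem (hj W ⟨hT.of_le hW, htight⟩)]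
  · have := card_nbhd_le_card_nbhd_erase_add_one (X := X) (J := J) (W := W) j
    omega

theorem HallIndep.isTight_inf {C : Submodule F V} (hC : HallIndep X J C)
    (hU : #(nbhd X J U) < finrank F U) (hdim : finrank F U ≤ finrank F ↥(U ⊓ C) + 1) :
    IsTight X J (U ⊓ C) ∧ nbhd X J (U ⊓ C) = nbhd X J U := by
  have hsub : nbhd X J (U ⊓ C) ⊆ nbhd X J U := nbhd_mono_right inf_le_left
  have hle := hC (U ⊓ C) inf_le_right
  have := card_le_card hsub
  exact ⟨⟨hC.of_le inf_le_right, by omega⟩, eq_of_subset_of_card_le hsub (by omega)⟩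

end HallIndep

section FiniteDimensional

variable [FiniteDimensional F V]

theorem IsTight.sup (hA : IsTight X J A) (hB : IsTight X J B) (h : HallIndep X J (A ⊔ B)) :
    IsTight X J (A ⊔ B) := by
  classical
  refine ⟨h, le_antisymm h.finrank_le ?_⟩
  have hdim := Submodule.finrank_sup_add_finrank_inf_eq A B
  have hinf : finrank F ↥(A ⊓ B) ≤ #(nbhd X J A ∩ nbhd X J B) :=
    (hA.1 _ inf_le_left).trans (card_le_card nbhd_inf_subset)
  have hcard := card_union_add_card_inter (nbhd X J A) (nbhd X J B)
  rw [← nbhd_sup] at hcard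
  have := hA.2
  have := hB.2
  omega

theorem HallIndep.exists_greatest_isTight {C : Submodule F V} (hC : HallIndep X J C) :
    ∃ Ts ≤ C, IsTight X J Ts ∧ ∀ H ≤ C, IsTight X J H → H ≤ Ts := by
  obtain ⟨Ts, -, ⟨hTsC, hTs⟩, hmax⟩ :=
    exists_maximal_ge_of_wellFoundedGT (fun W => W ≤ C ∧ IsTight X J W) ⊥
      ⟨bot_le, isTight_bot⟩
  refine ⟨Ts, hTsC, hTs, fun H hHC hH => ?_⟩
  have hsup : H ⊔ Ts ≤ C := sup_le hHC hTsC
  exact le_sup_left.trans (hmax ⟨hsup, hH.sup hTs (hC.of_le hsup)⟩ le_sup_right)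

-- A vector `x ∉ C` of `M` yields a violator `U ≤ F ∙ x ⊔ C`, whose trace `U ⊓ C` is tight with
-- the same neighbourhood as `U`; hence `U` lies in the hull of `Ts`, and `x ∈ C ⊔ U`.
theorem le_sup_hull_of_maximal {C M Ts : Submodule F V}
    (hC : Maximal (fun D => D ≤ M ∧ HallIndep X J D) C)
    (hTs : ∀ H ≤ C, IsTight X J H → H ≤ Ts) : M ≤ C ⊔ hull X J Ts := by
  intro x hxM
  by_cases hxC : x ∈ C
  · exact Submodule.mem_sup_left hxC
  have hCD : C ⋖ (F ∙ x) ⊔ C := Submodule.covBy_span_singleton_sup hxC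
  have hDM : (F ∙ x) ⊔ C ≤ M :=
    sup_le ((Submodule.span_singleton_le_iff_mem x M).2 hxM) hC.1.1
  obtain ⟨U, hUD, hU⟩ : ∃ U ≤ (F ∙ x) ⊔ C, #(nbhd X J U) < finrank F U := by
    by_contra! hD
    exact hCD.lt.not_ge (hC.2 ⟨hDM, hD⟩ hCD.le)
  have hUC : ¬U ≤ C := fun h => (hC.1.2 U h).not_gt hU
  have hUCD : U ⊔ C = (F ∙ x) ⊔ C :=
    (hCD.eq_or_eq le_sup_right (sup_le hUD hCD.le)).resolve_left
      fun h => hUC (h ▸ le_sup_left)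
  have hdim : finrank F U ≤ finrank F ↥(U ⊓ C) + 1 := by
    have h1 := Submodule.finrank_sup_add_finrank_inf_eq U C
    have h2 := Submodule.finrank_add_le_finrank_add_finrank (F ∙ x) C
    rw [hUCD] at h1
    rw [finrank_span_singleton (by rintro rfl; exact hxC C.zero_mem)] at h2
    omega
  obtain ⟨hH, hHU⟩ := hC.1.2.isTight_inf hU hdim
  have hUhull : U ≤ hull X J Ts := by
    rw [le_hull_iff, ← hHU]
    exact nbhd_mono_right (hTs _ inf_le_right hH)
  have hxUC : x ∈ U ⊔ C :=
    hUCD ▸ Submodule.mem_sup_left (Submodule.mem_span_singleton_self x)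
  rw [sup_comm] at hxUC
  exact sup_le_sup_left hUhull C hxUC

variable [DecidableEq ι]

-- With `C` maximal `J.erase j`-independent in `T`, `T = C ⊔ G` where `G` sits in the hull of the
-- largest tight `Ts ≤ C`; deleting `j` lets `G` exceed `Ts ≤ C ⊓ G` by at most one dimension.
theorem HallIndep.exists_erase (hT : HallIndep X J T) (j : ι) :
    ∃ T' ≤ T, HallIndep X (J.erase j) T' ∧ finrank F T ≤ finrank F T' + 1 := by
  obtain ⟨C, -, hC⟩ := exists_maximal_ge_of_wellFoundedGT
    (fun D => D ≤ T ∧ HallIndep X (J.erase j) D) ⊥ ⟨bot_le, hallIndep_bot⟩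
  obtain ⟨Ts, hTsC, hTs, hTsmax⟩ := hC.1.2.exists_greatest_isTight
  set G := hull X (J.erase j) Ts ⊓ T
  have hCG : C ⊔ G = T := by
    rw [← sup_inf_assoc_of_le _ hC.1.1]
    exact inf_eq_right.2 (le_sup_hull_of_maximal hC hTsmax)
  have hTsG : Ts ≤ C ⊓ G := le_inf hTsC (le_inf le_hull_self (hTsC.trans hC.1.1))
  have hG : finrank F G ≤ finrank F Ts + 1 := calc
    finrank F G ≤ #(nbhd X J G) := hT G inf_le_right
    _ ≤ #(nbhd X (J.erase j) G) + 1 := card_nbhd_le_card_nbhd_erase_add_one j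
    _ ≤ #(nbhd X (J.erase j) Ts) + 1 := by gcongr; exact le_hull_iff.1 inf_le_left
    _ = finrank F Ts + 1 := by rw [hTs.2]
  have hdim := Submodule.finrank_sup_add_finrank_inf_eq C G
  have := Submodule.finrank_mono hTsG
  rw [hCG] at hdim
  exact ⟨C, hC.1.1, hC.1.2, by omega⟩

theorem HallIndep.exists_sdiff (hT : HallIndep X J T) (S : Finset ι) :
    ∃ T' ≤ T, HallIndep X (J \ S) T' ∧ finrank F T ≤ finrank F T' + #S := by
  induction S using Finset.induction_on generalizing J T with
  | empty => exact ⟨T, le_rfl, by simpa using hT, by simp⟩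
  | insert j S hjS ih =>
    obtain ⟨T₁, hT₁T, hT₁, hdim₁⟩ := hT.exists_erase j
    obtain ⟨T₂, hT₂T₁, hT₂, hdim₂⟩ := ih hT₁
    refine ⟨T₂, hT₂T₁.trans hT₁T, ?_, ?_⟩
    · rwa [sdiff_insert, ← erase_sdiff_comm]
    · rw [card_insert_of_notMem hjS]
      omega

theorem HallIndep.sup_of_sdiff_nbhd (hA : HallIndep X J A)
    (hB : HallIndep X (J \ nbhd X J A) B) : HallIndep X J (A ⊔ B) := by
  intro W hW
  set B' := B ⊓ (W ⊔ A)
  have hWA : W ⊔ A = A ⊔ B' := by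
    rw [← sup_inf_assoc_of_le B le_sup_right, inf_eq_right.2 (sup_le hW le_sup_left)]
  have hdimWA := Submodule.finrank_sup_add_finrank_inf_eq W A
  have hdimAB := Submodule.finrank_sup_add_finrank_inf_eq A B'
  rw [hWA] at hdimWA
  have hinter : finrank F ↥(W ⊓ A) ≤ #(nbhd X J W ∩ nbhd X J A) :=
    (hA _ inf_le_right).trans (card_le_card nbhd_inf_subset)
  have hsdiff : finrank F B' ≤ #(nbhd X J W \ nbhd X J A) := by
    refine (hB B' inf_le_left).trans (card_le_card ?_)
    have hB'WA : nbhd X J B' ⊆ nbhd X J W ∪ nbhd X J A := by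
      rw [← nbhd_sup]
      exact nbhd_mono_right inf_le_right
    rw [nbhd_sdiff]
    exact (sdiff_subset_sdiff hB'WA subset_rfl).trans (union_sdiff_right _ _).subset
  have := card_inter_add_card_sdiff (nbhd X J W) (nbhd X J A)
  omega

theorem IsTight.exists_isTight_nbhd_eq_union (hA : IsTight X J A) (hB : IsTight X J B) :
    ∃ C, IsTight X J C ∧ nbhd X J C = nbhd X J A ∪ nbhd X J B := by
  obtain ⟨B', hB'B, hB', hdimB⟩ := hB.1.restrict_nbhd.exists_sdiff (nbhd X J A ∩ nbhd X J B)
  replace hB' : HallIndep X (J \ nbhd X J A) B' := hB'.mono_left fun j hj => by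
    simp only [mem_sdiff, mem_inter] at hj ⊢
    exact ⟨nbhd_subset hj.1, fun h => hj.2 ⟨h, hj.1⟩⟩
  have hC := hA.1.sup_of_sdiff_nbhd hB'
  have hdisj : A ⊓ B' = ⊥ := by
    simpa [nbhd_sdiff, sdiff_eq_empty_iff_subset.2 (nbhd_mono_right inf_le_left)] using
      hB' (A ⊓ B') inf_le_right
  have hdimC := Submodule.finrank_sup_add_finrank_inf_eq A B'
  rw [hdisj, finrank_bot] at hdimC
  have hsub : nbhd X J (A ⊔ B') ⊆ nbhd X J A ∪ nbhd X J B :=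
    nbhd_sup (X := X) ▸ nbhd_mono_right (sup_le_sup_left hB'B A)
  have := card_le_card hsub
  have := card_union_add_card_inter (nbhd X J A) (nbhd X J B)
  have := hC.finrank_le
  have := hA.2
  have := hB.2
  exact ⟨A ⊔ B', ⟨hC, by omega⟩, eq_of_subset_of_card_le hsub (by omega)⟩

theorem exists_isTight_nbhd_eq (h : ∀ j ∈ J, ∃ W, IsTight X J W ∧ j ∈ nbhd X J W) :
    ∃ W, IsTight X J W ∧ nbhd X J W = J := by
  suffices ∀ S ⊆ J, ∃ W, IsTight X J W ∧ S ⊆ nbhd X J W by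
    obtain ⟨W, hW, hJW⟩ := this J subset_rfl
    exact ⟨W, hW, nbhd_subset.antisymm hJW⟩
  intro S hS
  induction S using Finset.induction_on with
  | empty => exact ⟨⊥, isTight_bot, empty_subset _⟩
  | insert j S _ ih =>
    obtain ⟨W₁, hW₁, hSW₁⟩ := ih ((subset_insert j S).trans hS)
    obtain ⟨W₂, hW₂, hjW₂⟩ := h j (hS (mem_insert_self j S))
    obtain ⟨C, hC, hCnbhd⟩ := hW₁.exists_isTight_nbhd_eq_union hW₂
    exact ⟨C, hC,
      hCnbhd ▸ insert_subset (mem_union_right _ hjW₂) (hSW₁.trans subset_union_left)⟩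

end FiniteDimensional

section Fintype

variable [Fintype ι]

theorem IsPartialQTransversal.hallIndep [FiniteDimensional F V]
    (hT : IsPartialQTransversal X T) : HallIndep X univ T := by
  intro W hWT
  let w : Fin (finrank F W) → V := fun i => Module.finBasis F W i
  have hw : LinearIndependent F w :=
    (Module.finBasis F W).linearIndependent.map' W.subtype W.ker_subtype
  have hwT : Set.range w ⊆ T := by
    rintro _ ⟨i, rfl⟩
    exact hWT (Module.finBasis F W i).2
  have hw' : LinearIndepOn F id (Set.range w) := (linearIndepOn_id_range_iff hw.injective).2 hw
  set b := hw'.extend hwT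
  have hb : LinearIndepOn F id b := hw'.linearIndepOn_extend hwT
  have hwb : Set.range w ⊆ b := hw'.subset_extend hwT
  have : Finite b := LinearIndependent.setFinite hb
  let e := (Finite.equivFin b).symm
  have hspan : Submodule.span F (Set.range fun i => (e i : V)) = T := by
    change Submodule.span F (Set.range (Subtype.val ∘ e)) = T
    rw [e.surjective.range_comp, Subtype.range_coe,
      hw'.span_extend_eq_span hwT, Submodule.span_eq]
  obtain ⟨σ, hσ, hσX⟩ := hT _ (fun i => (e i : V)) (hb.comp e e.injective) hspan
  let τ : Fin (finrank F W) → ι := fun i => σ (e.symm ⟨w i, hwb ⟨i, rfl⟩⟩)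
  have hτ : ∀ i, ¬W ≤ X (τ i) := fun i hWX => by
    have := hσX (e.symm ⟨w i, hwb ⟨i, rfl⟩⟩)
    rw [Equiv.apply_symm_apply] at this
    exact this (hWX (Module.finBasis F W i).2)
  calc finrank F W = #(univ : Finset (Fin (finrank F W))) := by simp
    _ ≤ #(nbhd X univ W) := card_le_card_of_injOn τ (fun i _ => by simpa using hτ i)
        fun i _ i' _ h => hw.injective (Subtype.mk.inj (e.symm.injective (hσ h)))

theorem HallIndep.isPartialQTransversal (hT : HallIndep X univ T) :
    IsPartialQTransversal X T := by
  classical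
  intro m b hb hbT
  let t : Fin m → Finset ι := fun i => {j | b i ∉ X j}
  suffices hHall : ∀ s : Finset (Fin m), #s ≤ #(s.biUnion t) by
    obtain ⟨σ, hσ, hσt⟩ := (all_card_le_biUnion_card_iff_exists_injective t).1 hHall
    exact ⟨σ, hσ, fun i => by simpa [t] using hσt i⟩
  intro s
  have hspan : finrank F (Submodule.span F (Set.range fun i : s => b i)) = #s := by
    rw [finrank_span_eq_card (b := fun i : s => b i) (hb.comp _ Subtype.val_injective),
      Fintype.card_coe]
  have hle : Submodule.span F (Set.range fun i : s => b i) ≤ T := by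
    rw [← hbT]
    exact Submodule.span_mono (Set.range_comp_subset_range _ b)
  refine hspan ▸ (hT _ hle).trans (card_le_card fun j hj => ?_)
  simp only [mem_nbhd, Submodule.span_le, Set.range_subset_iff, not_forall] at hj
  obtain ⟨-, i, hi⟩ := hj
  exact mem_biUnion.2 ⟨i, i.2, by simpa [t] using hi⟩

theorem isPartialQTransversal_iff_hallIndep [FiniteDimensional F V] :
    IsPartialQTransversal X T ↔ HallIndep X univ T :=
  ⟨IsPartialQTransversal.hallIndep, HallIndep.isPartialQTransversal⟩

omit [Fintype ι] in
theorem hallIndep_subtype_iff :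
    HallIndep (fun j : J => X j) univ T ↔ HallIndep X J T := by
  have hcard : ∀ W, #(nbhd (fun j : J => X j) univ W) = #(nbhd X J W) := fun W => by
    rw [← card_map (Function.Embedding.subtype (· ∈ J))]
    congr 1
    ext j
    simp [and_comm]
  simp only [HallIndep, hcard]

theorem exists_hallIndep_finrank_eq_card [DecidableEq ι] [FiniteDimensional F V]
    (hJ : Minimal (IsPresentation X) J) : ∃ W, HallIndep X univ W ∧ finrank F W = #J := by
  have hcover : ∀ j ∈ J, ∃ W, IsTight X J W ∧ j ∈ nbhd X J W := by
    intro j hj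
    by_contra! hfree
    have hpres : IsPresentation X (J.erase j) := fun T =>
      ⟨fun hT => (hJ.1 T).1 (hT.mono_left (erase_subset j J)),
        fun hT => ((hJ.1 T).2 hT).erase hfree⟩
    exact notMem_erase j J (hJ.2 hpres (erase_subset j J) hj)
  obtain ⟨W, hW, hWJ⟩ := exists_isTight_nbhd_eq hcover
  exact ⟨W, (hJ.1 W).1 hW.1, hW.2.trans (congrArg card hWJ)⟩

end Fintype

end QTransversal

open QTransversal

theorem exists_presentation_card_rank_general {F V : Type*} [Field F]
    [AddCommGroup V] [Module F V] [FiniteDimensional F V]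
    (k : ℕ) (X : Fin k → Submodule F V) (r : ℕ)
    (hr : IsGreatest
      {d : ℕ | ∃ T : Submodule F V, IsPartialQTransversal X T ∧ Module.finrank F T = d} r) :
    ∃ J : Finset (Fin k), J.card = r ∧
      ∀ T : Submodule F V,
        IsPartialQTransversal (fun j : J => X j) T ↔ IsPartialQTransversal X T := by
  obtain ⟨J, hJ⟩ := exists_minimal_of_wellFoundedLT (IsPresentation X) ⟨univ, fun _ => Iff.rfl⟩
  obtain ⟨W, hW, hWJ⟩ := exists_hallIndep_finrank_eq_card hJ
  obtain ⟨T₀, hT₀, rfl⟩ := hr.1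
  refine ⟨J, le_antisymm (hWJ ▸ hr.2 ⟨W, isPartialQTransversal_iff_hallIndep.2 hW, rfl⟩) ?_,
    fun T => ?_⟩
  · calc finrank F T₀ ≤ #(nbhd X J T₀) :=
          ((hJ.1 T₀).2 (isPartialQTransversal_iff_hallIndep.1 hT₀)).finrank_le
      _ ≤ #J := card_le_card nbhd_subset
  · rw [isPartialQTransversal_iff_hallIndep, isPartialQTransversal_iff_hallIndep,
      hallIndep_subtype_iff, hJ.1]

/-- If `r` is the maximum dimension of a partial q-transversal of `X = (X 1, …, X k)`,
then some subfamily indexed by a set `J` of exactly `r` indices has the same partial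
q-transversals as `X`. -/
theorem exists_presentation_card_rank {F V : Type*} [Field F] [Fintype F]
    [AddCommGroup V] [Module F V] [FiniteDimensional F V]
    (k : ℕ) (X : Fin k → Submodule F V) (r : ℕ)
    (hr : IsGreatest
      {d : ℕ | ∃ T : Submodule F V, IsPartialQTransversal X T ∧ Module.finrank F T = d} r) :
    ∃ J : Finset (Fin k), J.card = r ∧
      ∀ T : Submodule F V,
        IsPartialQTransversal (fun j : J => X j) T ↔ IsPartialQTransversal X T :=
  exists_presentation_card_rank_general k X r hr
end

section
/- Let V be a finite-dimensional vector space over a finite field F, let X = (X_1,...,X_n) be a family of subspaces of V, let f(Y) denote the number of indices i with Y not contained in X_i, and let r(Z) = min over subspaces A ≤ Z of (f(A) + dim Z − dim A) be the rank function of the q-matroid M of partial q-transversals of X. Then for each i ∈ {1,...,n}, X_i is a flat of M: for every subspace Y with X_i < Y ≤ V, r(Y) > r(X_i). -/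
/-- Each member `X i` of a presentation is a flat of the q-matroid `M` of partial
q-transversals of `X = (X 1, …, X n)`, whose rank function is
`r Z = min {f A + dim Z − dim A : A ≤ Z}`, where `f A` counts the indices `i` with
`A` not contained in `X i`: every subspace strictly containing `X i` has strictly
larger rank. -/
theorem presentation_members_are_flats {F V : Type*} [Field F] [Fintype F]
    [AddCommGroup V] [Module F V] [FiniteDimensional F V]
    (n : ℕ) (X : Fin n → Submodule F V)
    (f : Submodule F V → ℤ)
    (hf : ∀ A : Submodule F V, f A = Nat.card {i : Fin n // ¬ A ≤ X i})
    (r : Submodule F V → ℤ)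
    (hr : ∀ Z : Submodule F V, IsLeast
      {v : ℤ | ∃ A ≤ Z, v = f A + (Module.finrank F Z : ℤ) - Module.finrank F A} (r Z)) :
    ∀ i : Fin n, ∀ Y : Submodule F V, X i < Y → r (X i) < r Y := by
  classical
  intro i Y hXY
  obtain ⟨hmemY, hlbY⟩ := hr Y
  obtain ⟨hmemX, hlbX⟩ := hr (X i)
  obtain ⟨A, hAY, hvA⟩ := hmemY
  set A' := A ⊓ X i with hA'
  have hA'Xi : A' ≤ X i := inf_le_right
  have hA'A : A' ≤ A := inf_le_left
  have hrX : r (X i) ≤ f A' + (Module.finrank F (X i) : ℤ) - Module.finrank F A' :=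
    hlbX ⟨A', hA'Xi, rfl⟩
  -- f A' ≤ f A
  have hsubset : (Finset.univ.filter fun j : Fin n => ¬ A' ≤ X j) ⊆
      (Finset.univ.filter fun j : Fin n => ¬ A ≤ X j) := by
    intro j hj
    simp only [Finset.mem_filter, Finset.mem_univ, true_and] at hj ⊢
    exact fun h => hj (hA'A.trans h)
  have hcard_eq : ∀ B : Submodule F V, Nat.card {j : Fin n // ¬ B ≤ X j} =
      (Finset.univ.filter fun j : Fin n => ¬ B ≤ X j).card := by
    intro B
    rw [Nat.card_eq_fintype_card, Fintype.card_subtype]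
  -- dimension identity
  have hsup : A ⊔ X i ≤ Y := sup_le hAY hXY.le
  have hdim : Module.finrank F (A ⊔ X i : Submodule F V) + Module.finrank F A' =
      Module.finrank F A + Module.finrank F (X i) :=
    Submodule.finrank_sup_add_finrank_inf_eq A (X i)
  rw [hvA]
  by_cases hcase : A ⊔ X i = Y
  · -- then A ⊄ X i, so f A' < f A
    have hAnle : ¬ A ≤ X i := by
      intro h
      have : A ⊔ X i = X i := sup_eq_right.mpr h
      exact hXY.ne (this.symm.trans hcase)
    have hA'le : A' ≤ X i := hA'Xi
    have hflt : f A' < f A := by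
      rw [hf, hf, hcard_eq, hcard_eq]
      have : (Finset.univ.filter fun j : Fin n => ¬ A' ≤ X j) ⊂
          (Finset.univ.filter fun j : Fin n => ¬ A ≤ X j) := by
        refine (Finset.ssubset_iff_of_subset hsubset).mpr ⟨i, ?_, ?_⟩
        · simp [hAnle]
        · simp [hA'le]
      exact_mod_cast Finset.card_lt_card this
    have hdle : (Module.finrank F (X i) : ℤ) - Module.finrank F A' ≤
        (Module.finrank F Y : ℤ) - Module.finrank F A := by
      have h1 : Module.finrank F (A ⊔ X i : Submodule F V) = Module.finrank F Y := by
        rw [hcase]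
      omega
    linarith only [hrX, hflt, hdle]
  · -- then A ⊔ X i < Y, strict dimension inequality
    have hlt : A ⊔ X i < Y := lt_of_le_of_ne hsup hcase
    have hdlt : Module.finrank F (A ⊔ X i : Submodule F V) < Module.finrank F Y :=
      Submodule.finrank_lt_finrank_of_lt hlt
    have hfle : f A' ≤ f A := by
      rw [hf, hf, hcard_eq, hcard_eq]
      exact_mod_cast Finset.card_le_card hsubset
    linarith only [hrX, hfle, hdlt, hdim, hvA]
end
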